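/- arXiv:2502.02400 — 7 statements merged into one kernel-verified Lean document; each statement's English description precedes it below -/
import Mathlib

section
/- Let X be a topological space covered by an open cover U = {U_i}. If x ∈ U_i and y ∈ U_j, then any continuous path γ from x to y in X is carried by some edge path on the nerve N(U) from vertex i to vertex j; that is, there is an edge path η : {0,…,m} → N(U) with η(0)=i, η(m)=j and a parametrisation of γ such that γ(k/m) ∈ U_{η(k)} for each k, and γ((k/m,(k+1)/m)) ⊆ U_{η(k)} ∪ U_{η(k+1)} for each k < m. -/
/-!
Pull the cover back along `γ` to an open cover of `[0,1]` and take a Lebesgue number `δ`. For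
`m` with `1/m < δ`, each grid point `k/m` has a cover index `c k` with
`γ[(k-1)/m, (k+1)/m] ⊆ U (c k)`, so for `m ≥ 2` the path `i, c 1, …, c (m-1), j` carries `γ`
without reparametrisation: each open grid interval lies in the set of its inner endpoint, and
consecutive sets share `γ` of a grid point.
-/

open unitInterval

variable {X : Type*} [TopologicalSpace X] {ι : Type*}

/-- `γ` (with the given parametrisation) is carried by the edge path `η 0, …, η m` on the
nerve: `γ(k/m) ∈ U (η k)` for `k ≤ m` and `γ((k/m,(k+1)/m)) ⊆ U (η k) ∪ U (η (k+1))` for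
`k < m` (when `m = 0` the whole path lies in `U (η 0)`). -/
def Carries (U : ι → Set X) {x y : X} (γ : Path x y) (m : ℕ) (η : ℕ → ι) : Prop :=
  (∀ k : ℕ, k ≤ m → γ.extend ((k : ℝ) / m) ∈ U (η k)) ∧
  (∀ k : ℕ, k < m → ∀ t : ℝ, (k : ℝ) / m < t → t < ((k : ℝ) + 1) / m →
      γ.extend t ∈ U (η k) ∪ U (η (k + 1))) ∧
  (m = 0 → ∀ t : unitInterval, γ t ∈ U (η 0))

def CarriedBy (U : ι → Set X) {x y : X} (γ : Path x y) (m : ℕ) (η : ℕ → ι) : Prop :=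
  ∃ (f : unitInterval → unitInterval) (hf : Continuous f) (h0 : f 0 = 0) (h1 : f 1 = 1),
    Carries U (γ.reparam f hf h0 h1) m η

open Set Filter Function

def GridSubordinate (U : ι → Set X) (f : ℝ → X) (m : ℕ) (c : ℕ → ι) : Prop :=
  ∀ k ≤ m, ∀ t : ℝ, |t - k / m| ≤ 1 / m → f t ∈ U (c k)

theorem eventually_exists_gridSubordinate {U : ι → Set X} (hU : ∀ i, IsOpen (U i))
    (hcov : ⋃ i, U i = univ) {f : ℝ → X} (hf : Continuous f) :
    ∀ᶠ m : ℕ in atTop, ∃ c, GridSubordinate U f m c := by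
  obtain ⟨δ, hδ, hball⟩ := lebesgue_number_lemma_of_metric isCompact_Icc
    (fun i => (hU i).preimage hf) (by simp [← preimage_iUnion, hcov])
  obtain ⟨i₀, -⟩ := hball 0 ⟨le_rfl, zero_le_one⟩
  filter_upwards [tendsto_one_div_atTop_nhds_zero_nat.eventually (gt_mem_nhds hδ)] with m hm
  have : ∀ k, ∃ i, k ≤ m → ∀ t : ℝ, |t - k / m| ≤ 1 / m → f t ∈ U i := by
    intro k
    by_cases hk : k ≤ m
    · obtain ⟨i, hi⟩ := hball ((k : ℝ) / m)
        ⟨by positivity, div_le_one_of_le₀ (by exact_mod_cast hk) m.cast_nonneg⟩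
      exact ⟨i, fun _ t ht => hi (by rw [Metric.mem_ball, Real.dist_eq]; linarith)⟩
    · exact ⟨i₀, fun h => absurd h hk⟩
  choose c hc using this
  exact ⟨c, hc⟩

theorem abs_sub_grid_le_of_mem_Icc {m k : ℕ} {t : ℝ} (h₁ : (k : ℝ) / m ≤ t)
    (h₂ : t ≤ ((k : ℝ) + 1) / m) :
    |t - k / m| ≤ 1 / m ∧ |t - (k + 1 : ℕ) / m| ≤ 1 / m := by
  have : (k : ℝ) / m ≤ ((k : ℝ) + 1) / m := h₁.trans h₂
  have hstep : ((k : ℝ) + 1) / m = k / m + 1 / m := by ring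
  push_cast
  constructor <;> rw [abs_le] <;> constructor <;> linarith

section Carrier

variable {U : ι → Set X} {x y : X} {γ : Path x y} {m : ℕ} {c : ℕ → ι} {i j : ι}

theorem gridSubordinate_vertex (hx : x ∈ U i) (hy : y ∈ U j) (hm : m ≠ 0)
    (hc : GridSubordinate U γ.extend m c) {k : ℕ} (hk : k ≤ m) :
    γ.extend (k / m) ∈ U (update (update c 0 i) m j k) := by
  rcases eq_or_ne k m with rfl | hkm
  · simpa [div_self (Nat.cast_ne_zero (R := ℝ) |>.mpr hm)] using hy
  rcases eq_or_ne k 0 with rfl | hk0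
  · simpa [hm.symm] using hx
  rw [update_of_ne hkm, update_of_ne hk0]
  exact hc k hk _ (by simp)

theorem gridSubordinate_edge (hm : 2 ≤ m) (hc : GridSubordinate U γ.extend m c) {k : ℕ}
    (hk : k < m) {t : ℝ} (h₁ : (k : ℝ) / m ≤ t) (h₂ : t ≤ ((k : ℝ) + 1) / m) :
    γ.extend t ∈ U (update (update c 0 i) m j k) ∪ U (update (update c 0 i) m j (k + 1)) := by
  obtain ⟨hnear, hnear'⟩ := abs_sub_grid_le_of_mem_Icc h₁ h₂
  rcases eq_or_ne k 0 with rfl | hk0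
  · right
    rw [update_of_ne (by omega), update_of_ne (by omega)]
    exact hc 1 (by omega) t hnear'
  · left
    rw [update_of_ne hk.ne, update_of_ne hk0]
    exact hc k hk.le t hnear

theorem carries_of_gridSubordinate (hx : x ∈ U i) (hy : y ∈ U j) (hm : 2 ≤ m)
    (hc : GridSubordinate U γ.extend m c) : Carries U γ m (update (update c 0 i) m j) :=
  ⟨fun _ hk => gridSubordinate_vertex hx hy (by omega) hc hk,
    fun _ hk _ h₁ h₂ => gridSubordinate_edge hm hc hk h₁.le h₂.le,
    fun h => absurd h (by omega)⟩

theorem nerve_adjacent_of_gridSubordinate (hx : x ∈ U i) (hy : y ∈ U j) (hm : 2 ≤ m)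
    (hc : GridSubordinate U γ.extend m c) {k : ℕ} (hk : k < m) :
    (U (update (update c 0 i) m j k) ∩ U (update (update c 0 i) m j (k + 1))).Nonempty := by
  have hm0 : m ≠ 0 := by omega
  rcases eq_or_ne k 0 with rfl | hk0
  · have hx₀ := gridSubordinate_vertex hx hy hm0 hc (Nat.zero_le m)
    rw [Nat.cast_zero, zero_div] at hx₀
    refine ⟨_, hx₀, ?_⟩
    rw [update_of_ne (by omega), update_of_ne (by omega)]
    exact hc 1 (by omega) 0 (by simp)
  · refine ⟨γ.extend ((k + 1 : ℕ) / m), ?_, gridSubordinate_vertex hx hy hm0 hc hk⟩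
    rw [update_of_ne hk.ne, update_of_ne hk0]
    exact hc k hk.le _ (by
      push_cast; rw [add_div, add_sub_cancel_left, abs_of_nonneg (by positivity)])

end Carrier

/-- Any path from `x ∈ U i` to `y ∈ U j` is carried by some edge path on
the nerve of the open cover `U` from vertex `i` to vertex `j`. -/
theorem path_carrier (U : ι → Set X) (hUopen : ∀ i, IsOpen (U i))
    (hUcov : ⋃ i, U i = Set.univ) {x y : X} {i j : ι}
    (hx : x ∈ U i) (hy : y ∈ U j) (γ : Path x y) :
    ∃ (m : ℕ) (η : ℕ → ι), η 0 = i ∧ η m = j ∧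
      (∀ k : ℕ, k < m → (U (η k) ∩ U (η (k + 1))).Nonempty) ∧
      CarriedBy U γ m η := by
  obtain ⟨m, ⟨c, hc⟩, hm⟩ := ((eventually_exists_gridSubordinate hUopen hUcov
    γ.continuous_extend).and (eventually_ge_atTop 2)).exists
  refine ⟨m, update (update c 0 i) m j, by simp [show (0 : ℕ) ≠ m by omega], by simp,
    fun k hk => nerve_adjacent_of_gridSubordinate hx hy hm hc hk,
    id, continuous_id, rfl, rfl, ?_⟩
  rw [γ.reparam_id]
  exact carries_of_gridSubordinate hx hy hm hc
end

section
/- Let U = {U_i} be a good cover of a topological space X (all finite nonempty intersections of cover elements are contractible). Suppose two paths γ, γ′ : I → X from x to y are carried by edge paths η, η′ on the nerve N(U) from vertex i to vertex j, respectively. If γ and γ′ are homotopic rel endpoints, then η and η′ are edge homotopic. -/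
/-!
STATEMENT 2: For a good cover `U` of `X`, if two paths `γ, γ'` from `x` to `y`, homotopic
rel endpoints, are carried by edge paths `η, η'` on the nerve of `U` from `i` to `j`, then
`η` and `η'` are edge homotopic.
-/

open unitInterval

variable {X : Type*} [TopologicalSpace X] {ι : Type*} [DecidableEq ι]

/-- An abstract simplicial complex on a vertex type `V`. -/
structure ASC (V : Type*) where
  faces : Set (Finset V)
  down_closed : ∀ {s t : Finset V}, s ∈ faces → t ⊆ s → t.Nonempty → t ∈ faces

/-- The nerve of a cover `U`: finite nonempty index sets with nonempty intersection. -/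
def nerve (U : ι → Set X) : ASC ι where
  faces := {s : Finset ι | s.Nonempty ∧ (⋂ i ∈ s, U i).Nonempty}
  down_closed := by
    rintro s t ⟨-, z, hz⟩ hts ht
    exact ⟨ht, z, by simp only [Set.mem_iInter] at hz ⊢; exact fun i hi => hz i (hts hi)⟩

/-- Elementary moves between edge paths: contracting/expanding across a 2-simplex, and
removing/inserting a repeated vertex. -/
inductive EStep (K : ASC ι) : List ι → List ι → Prop
  | expand (p q : List ι) (u v w : ι) (h : ({u, v, w} : Finset ι) ∈ K.faces) :
      EStep K (p ++ u :: w :: q) (p ++ u :: v :: w :: q)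
  | dup (p q : List ι) (u : ι) :
      EStep K (p ++ u :: q) (p ++ u :: u :: q)

/-- Edge homotopy of edge paths. -/
def EdgeHomotopic (K : ASC ι) : List ι → List ι → Prop :=
  Relation.EqvGen (EStep K)

/-- A good cover: an open cover all of whose finite nonempty intersections are contractible. -/
def IsGoodCover (U : ι → Set X) : Prop :=
  (∀ i, IsOpen (U i)) ∧ (⋃ i, U i = Set.univ) ∧
    ∀ s : Finset ι, s.Nonempty → (⋂ i ∈ s, U i).Nonempty →
      ContractibleSpace (⋂ i ∈ s, U i : Set X)

/-- The vertex list of the edge path `η 0, …, η m`. -/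
def etaList (m : ℕ) (η : ℕ → ι) : List ι := (List.range (m + 1)).map η

/-!
Subdivide the square finely enough (Lebesgue number) that the homotopy maps every small square
into a single cover element. The labels of one row of squares form an edge path, and two
neighbouring rows are edge homotopic through the triangles of the nerve spanned at the grid
points the rows share. The bottom and top rows are compared with the carrying edge paths: at
each grid point of a carried path choose one of the two carrying vertices of its block. The image
of each small interval is connected and covered by the two sets of its block, so consecutive
choices span an edge; the choices thus form a walk back and forth along the edge path, which
collapses onto it, and the walk is linked to the row by triangles again.
-/

open Set

section EdgePaths

variable {K : ASC ι}

theorem EdgeHomotopic.refl (l : List ι) : EdgeHomotopic K l l :=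
  Relation.EqvGen.refl l

theorem EdgeHomotopic.symm {l l' : List ι} (h : EdgeHomotopic K l l') : EdgeHomotopic K l' l :=
  Relation.EqvGen.symm _ _ h

theorem EdgeHomotopic.trans {l l' l'' : List ι} (h : EdgeHomotopic K l l')
    (h' : EdgeHomotopic K l' l'') : EdgeHomotopic K l l'' :=
  Relation.EqvGen.trans _ _ _ h h'

instance : Trans (EdgeHomotopic K) (EdgeHomotopic K) (EdgeHomotopic K) :=
  ⟨EdgeHomotopic.trans⟩

theorem EStep.append_right {l l' : List ι} (h : EStep K l l') (q : List ι) :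
    EStep K (l ++ q) (l' ++ q) := by
  cases h with
  | expand p q' u v w hf => simpa using EStep.expand p (q' ++ q) u v w hf
  | dup p q' u => simpa using EStep.dup (K := K) p (q' ++ q) u

theorem EdgeHomotopic.append_right {l l' : List ι} (h : EdgeHomotopic K l l') (q : List ι) :
    EdgeHomotopic K (l ++ q) (l' ++ q) := by
  induction h with
  | rel _ _ h => exact Relation.EqvGen.rel _ _ (h.append_right q)
  | refl => exact .refl _
  | symm _ _ _ ih => exact ih.symm
  | trans _ _ _ _ _ ih ih' => exact ih.trans ih'

theorem edgeHomotopic_dup (p q : List ι) (u : ι) :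
    EdgeHomotopic K (p ++ u :: q) (p ++ u :: u :: q) :=
  Relation.EqvGen.rel _ _ (EStep.dup p q u)

theorem edgeHomotopic_square (p q : List ι) {x y y' z : ι} (h₁ : {x, y, y'} ∈ K.faces)
    (h₂ : {y, y', z} ∈ K.faces) :
    EdgeHomotopic K (p ++ x :: y :: z :: q) (p ++ x :: y' :: z :: q) := by
  have expand_y' := EStep.expand (p ++ [x]) q y y' z h₂
  have expand_y := EStep.expand p (z :: q) x y y' h₁
  simp only [List.append_assoc, List.cons_append, List.nil_append] at expand_y'
  exact EdgeHomotopic.trans (.rel _ _ expand_y') (EdgeHomotopic.symm (.rel _ _ expand_y))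

omit [DecidableEq ι] in
theorem etaList_zero (f : ℕ → ι) : etaList 0 f = [f 0] := rfl

omit [DecidableEq ι] in
theorem etaList_eq_append (n : ℕ) (f : ℕ → ι) :
    etaList n f = (List.range n).map f ++ [f n] := by
  simp [etaList, List.range_succ]

omit [DecidableEq ι] in
theorem etaList_succ (n : ℕ) (f : ℕ → ι) : etaList (n + 1) f = etaList n f ++ [f (n + 1)] := by
  simp [etaList, List.range_succ]

omit [DecidableEq ι] in
theorem etaList_eq_cons (n : ℕ) (f : ℕ → ι) :
    etaList n f = f 0 :: (List.range n).map (fun b => f (b + 1)) := by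
  simp [etaList, List.range_succ_eq_map]

theorem edgeHomotopic_etaList_append_self (n : ℕ) (f : ℕ → ι) :
    EdgeHomotopic K (etaList n f) (etaList n f ++ [f n]) := by
  simpa [etaList_eq_append] using edgeHomotopic_dup (K := K) ((List.range n).map f) [] (f n)

theorem edgeHomotopic_cons_etaList (n : ℕ) (f : ℕ → ι) :
    EdgeHomotopic K (f 0 :: etaList n f) (etaList n f) := by
  simpa [etaList_eq_cons] using (edgeHomotopic_dup (K := K) [] _ (f 0)).symm

/-- Sweeping from left to right, each square `r b, r (b+1), r' b, r' (b+1)` cut along the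
diagonal `r (b+1) — r' b` trades `r (b+1)` for `r' b`. -/
theorem edgeHomotopic_ladder (r r' : ℕ → ι) : ∀ N : ℕ,
    (∀ b < N, {r b, r (b + 1), r' b} ∈ K.faces ∧ {r (b + 1), r' b, r' (b + 1)} ∈ K.faces) →
    EdgeHomotopic K (etaList N r ++ [r' N]) (r 0 :: etaList N r')
  | 0, _ => .refl _
  | N + 1, h => by
    obtain ⟨h₁, h₂⟩ := h N N.lt_succ_self
    have ih := edgeHomotopic_ladder r r' N fun b hb => h b (by omega)
    calc EdgeHomotopic K (etaList (N + 1) r ++ [r' (N + 1)])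
          ((List.range N).map r ++ r N :: r' N :: r' (N + 1) :: []) := by
          simpa [etaList_succ, etaList_eq_append] using
            edgeHomotopic_square (K := K) ((List.range N).map r) [] h₁ h₂
      _ = (etaList N r ++ [r' N]) ++ [r' (N + 1)] := by simp [etaList_eq_append]
      EdgeHomotopic K _ ((r 0 :: etaList N r') ++ [r' (N + 1)]) := ih.append_right _
      _ = r 0 :: etaList (N + 1) r' := by simp [etaList_succ]

theorem edgeHomotopic_etaList_comp (η : ℕ → ι) (ω : ℕ → ℕ) (hω : ω 0 = 0) : ∀ N : ℕ,
    (∀ b < N, ω (b + 1) ≤ ω b + 1 ∧ ω b ≤ ω (b + 1) + 1 ∧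
      {η (ω b), η (ω (b + 1))} ∈ K.faces) →
    EdgeHomotopic K (etaList N (η ∘ ω)) (etaList (ω N) η)
  | 0, _ => by simpa [etaList_zero, hω] using .refl _
  | N + 1, h => by
    obtain ⟨h₁, h₂, hface⟩ := h N N.lt_succ_self
    have ih := edgeHomotopic_etaList_comp η ω hω N fun b hb => h b (by omega)
    refine (etaList_succ N (η ∘ ω) ▸ ih.append_right [η (ω (N + 1))]).trans ?_
    rcases (by omega : ω (N + 1) = ω N ∨ ω (N + 1) = ω N + 1 ∨ ω N = ω (N + 1) + 1)
      with hstay | hfwd | hback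
    · rw [hstay]
      exact (edgeHomotopic_etaList_append_self _ η).symm
    · rw [hfwd, etaList_succ]
      exact .refl _
    · set k := ω (N + 1)
      rw [hback] at hface ⊢
      have hface' : {η k, η (k + 1), η k} ∈ K.faces := by
        rwa [Finset.insert_eq_of_mem (by simp)]
      calc EdgeHomotopic K (etaList (k + 1) η ++ [η k])
            ((List.range k).map η ++ η k :: η k :: []) := by
            simpa [etaList_succ, etaList_eq_append] using
              EdgeHomotopic.symm (.rel _ _ (EStep.expand ((List.range k).map η) [] _ _ _ hface'))
        EdgeHomotopic K _ (etaList k η) := by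
            simpa [etaList_eq_append] using (edgeHomotopic_dup _ [] (η k)).symm

end EdgePaths

omit [TopologicalSpace X] in
theorem mem_nerve_faces_of_mem {U : ι → Set X} {a b c : ι} {z : X} (ha : z ∈ U a)
    (hb : z ∈ U b) (hc : z ∈ U c) : {a, b, c} ∈ (nerve U).faces :=
  ⟨by simp, z, by simp [ha, hb, hc]⟩

theorem IsPreconnected.inter_nonempty_of_eq_or_eq {S A B P Q : Set X} (hS : IsPreconnected S)
    (hA : IsOpen A) (hB : IsOpen B) (hSAB : S ⊆ A ∪ B) (hP : P = A ∨ P = B)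
    (hQ : Q = A ∨ Q = B) {p q : X} (hp : p ∈ S ∩ P) (hq : q ∈ S ∩ Q) :
    (S ∩ (P ∩ Q)).Nonempty := by
  rcases hP with rfl | rfl <;> rcases hQ with rfl | rfl
  · exact ⟨p, hp.1, hp.2, hp.2⟩
  · exact hS _ _ hA hB hSAB ⟨p, hp⟩ ⟨q, hq⟩
  · exact hS _ _ hB hA (by rwa [union_comm] at hSAB) ⟨p, hp⟩ ⟨q, hq⟩
  · exact ⟨p, hp.1, hp.2, hp.2⟩

theorem natCast_div_mem_Icc {m M k b : ℕ} (hM : 0 < M) (hlo : k * M ≤ b)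
    (hhi : b ≤ (k + 1) * M) : (b : ℝ) / (m * M : ℕ) ∈ Icc ((k : ℝ) / m) ((k + 1) / m) := by
  rw [Nat.cast_mul, mul_comm, ← div_div]
  constructor <;> apply div_le_div_of_nonneg_right _ m.cast_nonneg
  · rw [le_div_iff₀ (by exact_mod_cast hM)]
    exact_mod_cast hlo
  · rw [div_le_iff₀ (by exact_mod_cast hM)]
    exact_mod_cast hhi

section Carries

variable {U : ι → Set X} {x y : X} {γ : Path x y} {m : ℕ} {η : ℕ → ι}

section
omit [DecidableEq ι]

theorem Carries.source_mem (h : Carries U γ m η) : x ∈ U (η 0) := by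
  simpa using h.1 0 m.zero_le

theorem Carries.target_mem (h : Carries U γ m η) (hm : 0 < m) : y ∈ U (η m) := by
  simpa [hm.ne'] using h.1 m le_rfl

theorem Carries.extend_mem_union (h : Carries U γ m η) {k : ℕ} (hk : k < m) {t : ℝ}
    (ht : t ∈ Icc ((k : ℝ) / m) ((k + 1) / m)) : γ.extend t ∈ U (η k) ∪ U (η (k + 1)) := by
  rcases ht.1.eq_or_lt with rfl | hlo
  · exact Or.inl (h.1 k hk.le)
  rcases ht.2.eq_or_lt with rfl | hhi
  · exact Or.inr (by exact_mod_cast h.1 (k + 1) hk)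
  exact h.2.1 k hk t hlo hhi

open Classical in
/-- The grid point `b / n` lies in the block `k = b / M` of the carrying edge path; this picks
whichever of `η k`, `η (k + 1)` has `γ (b / n)` in its set, preferring `η k`. -/
noncomputable def carryingIndex (U : ι → Set X) (γ : Path x y) (η : ℕ → ι) (M n b : ℕ) : ℕ :=
  if γ.extend ((b : ℝ) / n) ∈ U (η (b / M)) then b / M else b / M + 1

theorem carryingIndex_eq_or (U : ι → Set X) (γ : Path x y) (η : ℕ → ι) (M n b : ℕ) :
    carryingIndex U γ η M n b = b / M ∨ carryingIndex U γ η M n b = b / M + 1 := by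
  unfold carryingIndex
  split_ifs <;> simp

variable {M : ℕ}

theorem Carries.carryingIndex_of_dvd (h : Carries U γ m η) (hm : 0 < m) (hM : 0 < M) {b : ℕ}
    (hb : b ≤ m * M) (hdvd : M ∣ b) : carryingIndex U γ η M (m * M) b = b / M := by
  obtain ⟨k, rfl⟩ := hdvd
  have hk : k ≤ m := by nlinarith
  have hgrid : ((M * k : ℕ) : ℝ) / (m * M : ℕ) = k / m := by
    push_cast
    field_simp
  rw [carryingIndex, Nat.mul_div_cancel_left k hM, if_pos (by rw [hgrid]; exact h.1 k hk)]

theorem Carries.extend_mem_carryingIndex (h : Carries U γ m η) (hm : 0 < m) (hM : 0 < M)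
    {b : ℕ} (hb : b ≤ m * M) :
    γ.extend ((b : ℝ) / (m * M : ℕ)) ∈ U (η (carryingIndex U γ η M (m * M) b)) := by
  unfold carryingIndex
  split_ifs with hmem
  · exact hmem
  rcases hb.lt_or_eq with hb | rfl
  · have hk : b / M < m := Nat.div_lt_of_lt_mul (by rwa [mul_comm])
    have hhi : b ≤ (b / M + 1) * M := by
      have := Nat.lt_div_mul_add (a := b) hM
      rw [add_mul, one_mul]
      omega
    exact (h.extend_mem_union hk (natCast_div_mem_Icc hM (Nat.div_mul_le_self b M) hhi)
      ).resolve_left hmem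
  · exact absurd (by simpa [hm.ne', hM.ne'] using h.target_mem hm) hmem

theorem Carries.carryingIndex_succ_eq_or (h : Carries U γ m η) (hm : 0 < m) (hM : 0 < M)
    {c : ℕ} (hc : c < m * M) :
    carryingIndex U γ η M (m * M) (c + 1) = c / M ∨
      carryingIndex U γ η M (m * M) (c + 1) = c / M + 1 := by
  by_cases hdvd : M ∣ c + 1
  · right
    rw [h.carryingIndex_of_dvd hm hM hc hdvd, Nat.succ_div, if_pos hdvd]
  · simpa [Nat.succ_div, hdvd] using carryingIndex_eq_or U γ η M (m * M) (c + 1)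

/-- Both ends of a fine interval lie in one block `[k / m, (k + 1) / m]`, whose image is
connected and covered by `U (η k) ∪ U (η (k + 1))`. -/
theorem Carries.exists_mem_carryingIndex (hUopen : ∀ i, IsOpen (U i)) (h : Carries U γ m η)
    (hm : 0 < m) (hM : 0 < M) {c : ℕ} (hc : c < m * M) :
    ∃ z ∈ γ.extend '' Icc ((c : ℝ) / (m * M : ℕ)) ((c + 1) / (m * M : ℕ)),
      z ∈ U (η (carryingIndex U γ η M (m * M) c)) ∩
        U (η (carryingIndex U γ η M (m * M) (c + 1))) := by
  have hk : c / M < m := Nat.div_lt_of_lt_mul (by rwa [mul_comm])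
  have hlo : c / M * M ≤ c := Nat.div_mul_le_self c M
  have hhi : c + 1 ≤ (c / M + 1) * M := by
    have := Nat.lt_div_mul_add (a := c) hM
    rw [add_mul, one_mul]
    omega
  set k := c / M
  have hIcc : Icc ((c : ℝ) / (m * M : ℕ)) ((c + 1) / (m * M : ℕ)) ⊆
      Icc ((k : ℝ) / m) ((k + 1) / m) :=
    Icc_subset_Icc (natCast_div_mem_Icc hM hlo (by omega)).1
      (by exact_mod_cast (natCast_div_mem_Icc hM (by omega) hhi).2)
  have hS : IsPreconnected (γ.extend '' Icc ((c : ℝ) / (m * M : ℕ)) ((c + 1) / (m * M : ℕ))) :=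
    isPreconnected_Icc.image _ γ.continuous_extend.continuousOn
  have hSU : γ.extend '' Icc ((c : ℝ) / (m * M : ℕ)) ((c + 1) / (m * M : ℕ)) ⊆
      U (η k) ∪ U (η (k + 1)) := by
    rintro _ ⟨t, ht, rfl⟩
    exact h.extend_mem_union hk (hIcc ht)
  have hp := h.extend_mem_carryingIndex hm hM hc.le
  have hq : γ.extend (((c : ℝ) + 1) / (m * M : ℕ)) ∈
      U (η (carryingIndex U γ η M (m * M) (c + 1))) := by
    exact_mod_cast h.extend_mem_carryingIndex hm hM hc
  refine hS.inter_nonempty_of_eq_or_eq (hUopen _) (hUopen _) hSU ?_ ?_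
    ⟨mem_image_of_mem _ ⟨le_rfl, by gcongr; linarith⟩, hp⟩
    ⟨mem_image_of_mem _ ⟨by gcongr; linarith, le_rfl⟩, hq⟩
  · rcases carryingIndex_eq_or U γ η M (m * M) c with he | he <;> simp [he, k]
  · rcases h.carryingIndex_succ_eq_or hm hM hc with he | he <;> simp [he, k]

end

theorem Carries.exists_pos (h : Carries U γ m η) :
    ∃ m₁ η₁, 0 < m₁ ∧ Carries U γ m₁ η₁ ∧ η₁ 0 = η 0 ∧ η₁ m₁ = η m ∧
      EdgeHomotopic (nerve U) (etaList m η) (etaList m₁ η₁) := by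
  rcases m.eq_zero_or_pos with rfl | hm
  · have hext : ∀ t, γ.extend t ∈ U (η 0) := by
      intro t
      obtain ⟨s, hs⟩ : γ.extend t ∈ range γ := γ.extend_range ▸ mem_range_self t
      exact hs ▸ h.2.2 rfl s
    refine ⟨1, fun _ => η 0, one_pos, ⟨fun _ _ => hext _, fun _ _ t _ _ => Or.inl (hext t),
      by omega⟩, rfl, rfl, ?_⟩
    simpa [etaList] using edgeHomotopic_dup (K := nerve U) [] [] (η 0)
  · exact ⟨m, η, hm, h, rfl, rfl, .refl _⟩

end Carries

/-- `r b` labels the `b`-th interval `[(b - 1) / n, b / n]` of the grid of mesh `1 / n`, for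
`b ≤ n + 1`; the first and the last interval stick out of `[0, 1]`, where `γ.extend` is constant. -/
def IsFineRow (U : ι → Set X) {x y : X} (γ : Path x y) (n : ℕ) (r : ℕ → ι) : Prop :=
  ∀ b ≤ n + 1, γ.extend '' Icc (((b : ℝ) - 1) / n) (b / n) ⊆ U (r b)

section IsFineRow

variable {U : ι → Set X} {x y : X} {γ : Path x y} {n : ℕ} {r r' : ℕ → ι}

omit [DecidableEq ι] in
theorem IsFineRow.extend_mem (hr : IsFineRow U γ n r) {b : ℕ} (hb : b ≤ n) :
    γ.extend (b / n) ∈ U (r b) ∩ U (r (b + 1)) := by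
  refine ⟨hr b (by omega) (mem_image_of_mem _ ⟨?_, le_rfl⟩),
    hr (b + 1) (by omega) (mem_image_of_mem _ ⟨by push_cast; simp, ?_⟩)⟩ <;>
  · gcongr
    linarith

theorem IsFineRow.edgeHomotopic (hr : IsFineRow U γ n r) (hr' : IsFineRow U γ n r')
    (h0 : r 0 = r' 0) (hn : r (n + 1) = r' (n + 1)) :
    EdgeHomotopic (nerve U) (etaList (n + 1) r) (etaList (n + 1) r') := by
  have hfaces : ∀ b < n + 1, {r b, r (b + 1), r' b} ∈ (nerve U).faces ∧
      {r (b + 1), r' b, r' (b + 1)} ∈ (nerve U).faces := by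
    intro b hb
    obtain ⟨h₁, h₂⟩ := hr.extend_mem (by omega : b ≤ n)
    obtain ⟨h₁', h₂'⟩ := hr'.extend_mem (by omega : b ≤ n)
    exact ⟨mem_nerve_faces_of_mem h₁ h₂ h₁', mem_nerve_faces_of_mem h₂ h₁' h₂'⟩
  calc EdgeHomotopic (nerve U) (etaList (n + 1) r) (etaList (n + 1) r ++ [r' (n + 1)]) := by
        rw [← hn]
        exact edgeHomotopic_etaList_append_self _ _
    EdgeHomotopic (nerve U) _ (r' 0 :: etaList (n + 1) r') := by
        rw [← h0]
        exact edgeHomotopic_ladder r r' (n + 1) hfaces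
    EdgeHomotopic (nerve U) _ (etaList (n + 1) r') := edgeHomotopic_cons_etaList _ _

/-- Along the grid points, the carrying vertices `η (carryingIndex …)` form a walk on `η`
that is linked to the fine row by triangles of the nerve. -/
theorem Carries.edgeHomotopic_etaList_of_isFineRow (hUopen : ∀ i, IsOpen (U i)) {m : ℕ}
    {η : ℕ → ι} (h : Carries U γ m η) (hmn : m ∣ n) (hn : 0 < n)
    (hr : IsFineRow U γ n r) (hr0 : r 0 = η 0) (hrn : r (n + 1) = η m) :
    EdgeHomotopic (nerve U) (etaList m η) (etaList (n + 1) r) := by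
  obtain ⟨M, rfl⟩ := hmn
  have hm : 0 < m := Nat.pos_of_mul_pos_right hn
  have hM : 0 < M := Nat.pos_of_mul_pos_left hn
  set κ := carryingIndex U γ η M (m * M)
  have hκ0 : κ 0 = 0 := by
    simpa using h.carryingIndex_of_dvd hm hM (Nat.zero_le _) (dvd_zero M)
  have hκn : κ (m * M) = m := by
    simpa [hM.ne'] using h.carryingIndex_of_dvd hm hM le_rfl (dvd_mul_left M m)
  have hfaces : ∀ c < m * M, {η (κ c), η (κ (c + 1)), r (c + 1)} ∈ (nerve U).faces ∧
      {η (κ (c + 1)), r (c + 1), r (c + 1 + 1)} ∈ (nerve U).faces := by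
    intro c hc
    obtain ⟨_, ⟨t, ht, rfl⟩, hz₁, hz₂⟩ := h.exists_mem_carryingIndex hUopen hm hM hc
    have hzr : γ.extend t ∈ U (r (c + 1)) :=
      hr (c + 1) (by omega) (mem_image_of_mem _ (by simpa using ht))
    obtain ⟨hq₁, hq₂⟩ := hr.extend_mem (b := c + 1) hc
    have hqκ : γ.extend (((c + 1 : ℕ) : ℝ) / (m * M : ℕ)) ∈ U (η (κ (c + 1))) :=
      h.extend_mem_carryingIndex hm hM hc
    exact ⟨mem_nerve_faces_of_mem hz₁ hz₂ hzr, mem_nerve_faces_of_mem hqκ hq₁ hq₂⟩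
  have hwalk : ∀ c < m * M, κ (c + 1) ≤ κ c + 1 ∧ κ c ≤ κ (c + 1) + 1 ∧
      {η (κ c), η (κ (c + 1))} ∈ (nerve U).faces := by
    intro c hc
    have : κ c = c / M ∨ κ c = c / M + 1 := carryingIndex_eq_or U γ η M (m * M) c
    have : κ (c + 1) = c / M ∨ κ (c + 1) = c / M + 1 := h.carryingIndex_succ_eq_or hm hM hc
    refine ⟨by omega, by omega, (nerve U).down_closed (hfaces c hc).1 ?_ (by simp)⟩
    intro v
    simp only [Finset.mem_insert, Finset.mem_singleton]
    tauto
  calc EdgeHomotopic (nerve U) (etaList m η) (etaList (m * M) (η ∘ κ)) := by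
        simpa [hκn] using (edgeHomotopic_etaList_comp η κ hκ0 _ hwalk).symm
    EdgeHomotopic (nerve U) _ (etaList (m * M) (η ∘ κ) ++ [r (m * M + 1)]) := by
        simpa [hrn, hκn] using edgeHomotopic_etaList_append_self (K := nerve U) (m * M) (η ∘ κ)
    EdgeHomotopic (nerve U) _ (η (κ 0) :: etaList (m * M) (fun b => r (b + 1))) :=
        edgeHomotopic_ladder _ _ _ hfaces
    _ = etaList (m * M + 1) r := by rw [etaList_eq_cons (m * M + 1) r, hr0, hκ0]; rfl

end IsFineRow

section Homotopy

variable {U : ι → Set X}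

omit [DecidableEq ι] in
theorem exists_pos_forall_square_mem (hUopen : ∀ i, IsOpen (U i)) (hUcover : ⋃ i, U i = univ)
    {H : I × I → X} (hH : Continuous H) :
    ∃ ε > 0, ∀ a b : ℝ, ∃ v, ∀ p : I × I,
      (p.1 : ℝ) ∈ Icc a (a + ε) → (p.2 : ℝ) ∈ Icc b (b + ε) → H p ∈ U v := by
  obtain ⟨ρ, hρ, hball⟩ := lebesgue_number_lemma_of_metric isCompact_univ
    (fun v => (hUopen v).preimage hH) (by simp [← preimage_iUnion, hUcover])
  refine ⟨ρ / 2, half_pos hρ, fun a b => ?_⟩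
  obtain ⟨v, hv⟩ := hball (projIcc 0 1 zero_le_one a, projIcc 0 1 zero_le_one b) (mem_univ _)
  refine ⟨v, fun p hp₁ hp₂ => hv ?_⟩
  have hclose : ∀ (s : I) (c : ℝ), (s : ℝ) ∈ Icc c (c + ρ / 2) →
      dist s (projIcc 0 1 zero_le_one c) < ρ := by
    intro s c hs
    have := abs_projIcc_sub_projIcc (h := zero_le_one) (c := (s : ℝ)) (d := c)
    rw [projIcc_val] at this
    rw [Subtype.dist_eq, Real.dist_eq]
    exact this.trans_lt (abs_sub_lt_iff.2 ⟨by linarith [hs.2], by linarith [hs.1]⟩)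
  exact max_lt (hclose _ _ hp₁) (hclose _ _ hp₂)

variable {x y : X} {δ δ' : Path x y}

omit [DecidableEq ι] in
theorem Path.Homotopy.exists_isFineRow_grid (hUopen : ∀ i, IsOpen (U i))
    (hUcover : ⋃ i, U i = univ) (H : δ.Homotopy δ') {i j : ι} (hx : x ∈ U i) (hy : y ∈ U j) :
    ∃ K > 0, ∀ n ≥ K, ∃ F : ℕ → ℕ → ι, ∀ a, F a 0 = i ∧ F a (n + 1) = j ∧
      ∀ s : I, (s : ℝ) ∈ Icc ((a : ℝ) / n) ((a + 1) / n) → IsFineRow U (H.eval s) n (F a) := by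
  obtain ⟨ε, hε, hsq⟩ := exists_pos_forall_square_mem hUopen hUcover H.continuous
  refine ⟨⌈ε⁻¹⌉₊, Nat.ceil_pos.2 (inv_pos.2 hε), fun n hn => ?_⟩
  have hn0 : (0 : ℝ) < n := by exact_mod_cast (Nat.ceil_pos.2 (inv_pos.2 hε)).trans_le hn
  have hmesh : (1 : ℝ) / n ≤ ε := by
    rw [div_le_iff₀ hn0, ← inv_mul_le_iff₀ hε, mul_one]
    exact (Nat.le_ceil _).trans (by exact_mod_cast hn)
  choose G hG using fun a b : ℕ => hsq ((a : ℝ) / n) (((b : ℝ) - 1) / n)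
  refine ⟨fun a b => if b = 0 then i else if b = n + 1 then j else G a b,
    fun a => ⟨by simp, by simp, fun s hs b hb => ?_⟩⟩
  rintro _ ⟨t, ht, rfl⟩
  dsimp only
  split_ifs with hb0 hbn
  · subst hb0
    rwa [(H.eval s).extend_of_le_zero (by simpa using ht.2)]
  · subst hbn
    rwa [(H.eval s).extend_of_one_le (by simpa [hn0.ne'] using ht.1)]
  · have hb1 : (1 : ℝ) ≤ b := by exact_mod_cast Nat.one_le_iff_ne_zero.2 hb0
    have hbn : (b : ℝ) ≤ n := by exact_mod_cast (by omega : b ≤ n)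
    have ht01 : t ∈ Icc (0 : ℝ) 1 :=
      ⟨le_trans (by positivity) ht.1, ht.2.trans ((div_le_one hn0).2 hbn)⟩
    rw [Path.extend_apply _ ht01]
    refine hG a b (s, ⟨t, ht01⟩) ⟨hs.1, hs.2.trans ?_⟩ ⟨ht.1, ht.2.trans ?_⟩ <;>
    · rw [add_div, sub_div] at *
      linarith

theorem Path.Homotopy.exists_edgeHomotopic_isFineRow (hUopen : ∀ i, IsOpen (U i))
    (hUcover : ⋃ i, U i = univ) (H : δ.Homotopy δ') {i j : ι} (hx : x ∈ U i) (hy : y ∈ U j) :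
    ∃ K > 0, ∀ n ≥ K, ∃ r r', IsFineRow U δ n r ∧ r 0 = i ∧ r (n + 1) = j ∧
      IsFineRow U δ' n r' ∧ r' 0 = i ∧ r' (n + 1) = j ∧
      EdgeHomotopic (nerve U) (etaList (n + 1) r) (etaList (n + 1) r') := by
  obtain ⟨K, hK, hgrid⟩ := H.exists_isFineRow_grid hUopen hUcover hx hy
  refine ⟨K, hK, fun n hn => ?_⟩
  obtain ⟨F, hF⟩ := hgrid n hn
  have hn0 : (0 : ℝ) < n := by exact_mod_cast hK.trans_le hn
  have hrows : ∀ a ≤ n,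
      EdgeHomotopic (nerve U) (etaList (n + 1) (F 0)) (etaList (n + 1) (F a)) := by
    intro a
    induction a with
    | zero => exact fun _ => .refl _
    | succ a ih =>
      intro ha
      have hs : ((a : ℝ) + 1) / n ∈ I :=
        ⟨by positivity, (div_le_one hn0).2 (by exact_mod_cast ha)⟩
      refine (ih (by omega)).trans <| ((hF a).2.2 ⟨_, hs⟩ ⟨?_, le_rfl⟩).edgeHomotopic
        ((hF (a + 1)).2.2 ⟨_, hs⟩ ⟨by push_cast; rfl, ?_⟩) (by rw [(hF a).1, (hF (a + 1)).1])
        (by rw [(hF a).2.1, (hF (a + 1)).2.1])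
      · exact div_le_div_of_nonneg_right (by linarith) hn0.le
      · exact div_le_div_of_nonneg_right (by push_cast; linarith) hn0.le
  refine ⟨F 0, F n, ?_, (hF 0).1, (hF 0).2.1, ?_, (hF n).1, (hF n).2.1, hrows n le_rfl⟩
  · simpa using (hF 0).2.2 0 ⟨by simp, by positivity⟩
  · simpa using (hF n).2.2 1
      ⟨by simp [hn0.ne'], show (1 : ℝ) ≤ _ by rw [le_div_iff₀ hn0]; linarith⟩

end Homotopy

/-- If `γ` and `γ'` are homotopic rel endpoints and carried by edge paths
`η` (of length `m`) and `η'` (of length `m'`) on the nerve of the good cover `U`, both from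
`i` to `j`, then the two edge paths are edge homotopic on the nerve. -/
theorem homotopic_implies_edge_homotopic (U : ι → Set X) (hU : IsGoodCover U)
    {x y : X} {i j : ι} (γ γ' : Path x y) (hhom : γ.Homotopic γ')
    (m m' : ℕ) (η η' : ℕ → ι)
    (hη0 : η 0 = i) (hηm : η m = j) (hη'0 : η' 0 = i) (hη'm : η' m' = j)
    (hcar : CarriedBy U γ m η) (hcar' : CarriedBy U γ' m' η') :
    EdgeHomotopic (nerve U) (etaList m η) (etaList m' η') := by
  obtain ⟨hUopen, hUcover, -⟩ := hU
  obtain ⟨f, hf, hf0, hf1, hcar⟩ := hcar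
  obtain ⟨f', hf', hf'0, hf'1, hcar'⟩ := hcar'
  obtain ⟨H⟩ : (γ.reparam f hf hf0 hf1).Homotopic (γ'.reparam f' hf' hf'0 hf'1) :=
    (Path.Homotopic.symm ⟨.reparam γ f hf hf0 hf1⟩).trans
      (hhom.trans ⟨.reparam γ' f' hf' hf'0 hf'1⟩)
  obtain ⟨m₁, η₁, hm₁, hcar₁, h0₁, hm₁', he₁⟩ := hcar.exists_pos
  obtain ⟨m₂, η₂, hm₂, hcar₂, h0₂, hm₂', he₂⟩ := hcar'.exists_pos
  replace h0₁ := h0₁.trans hη0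
  replace hm₁' := hm₁'.trans hηm
  replace h0₂ := h0₂.trans hη'0
  replace hm₂' := hm₂'.trans hη'm
  obtain ⟨K, hK, hrows⟩ := H.exists_edgeHomotopic_isFineRow hUopen hUcover
    (h0₁ ▸ hcar₁.source_mem) (hm₁' ▸ hcar₁.target_mem hm₁)
  obtain ⟨r, r', hr, hr0, hrn, hr', hr'0, hr'n, hrr'⟩ :=
    hrows (m₁ * m₂ * K) (Nat.le_mul_of_pos_left K (Nat.mul_pos hm₁ hm₂))
  have hn : 0 < m₁ * m₂ * K := Nat.mul_pos (Nat.mul_pos hm₁ hm₂) hK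
  calc EdgeHomotopic (nerve U) (etaList m η) (etaList m₁ η₁) := he₁
    EdgeHomotopic (nerve U) _ (etaList (m₁ * m₂ * K + 1) r) :=
      hcar₁.edgeHomotopic_etaList_of_isFineRow hUopen ⟨m₂ * K, by ring⟩ hn hr
        (hr0.trans h0₁.symm) (hrn.trans hm₁'.symm)
    EdgeHomotopic (nerve U) _ (etaList (m₁ * m₂ * K + 1) r') := hrr'
    EdgeHomotopic (nerve U) _ (etaList m₂ η₂) :=
      (hcar₂.edgeHomotopic_etaList_of_isFineRow hUopen ⟨m₁ * K, by ring⟩ hn hr'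
        (hr'0.trans h0₂.symm) (hr'n.trans hm₂'.symm)).symm
    EdgeHomotopic (nerve U) _ (etaList m' η') := he₂.symm
end

section
/- Let p : X̃ → X be a Γ-covering with X path-connected, and let μ : π₁(X,x) → Γ be a monodromy homomorphism with image Γ′. Then all connected components of X̃, with the restrictions of p, are isomorphic Γ′-coverings of X, and there is a bijection between the set of connected components of X̃ and the set of left cosets of Γ′ in Γ. -/
/-!
`Γ` acts on the connected components of `X̃`. By path lifting, `p` maps every component onto
`X`, so any two components meet a common fibre and the action is transitive. The stabilizer of
the component of `x̃ = lam x` is the monodromy image: a loop `γ` lifts to a path from `x̃` to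
some `z` with `μ[γ] • z = x̃`, and conversely a path from `x̃` to `g • x̃` projects to a loop `γ`
with `μ[γ] * g = 1`, the action being free. Orbit–stabilizer identifies the components with
`Γ ⧸ Γ′`.
-/

structure GammaCovering (Γ : Type*) [Group Γ] (Xt X : Type*)
    [TopologicalSpace Xt] [TopologicalSpace X] [MulAction Γ Xt]
    [LocallyPathConnectedSpace X] where
  p : Xt → X
  continuous_p : Continuous p
  surjective_p : Function.Surjective p
  continuous_smul : ∀ g : Γ, Continuous fun z : Xt => g • z
  covering_action : ∀ z : Xt, ∃ V : Set Xt, IsOpen V ∧ z ∈ V ∧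
      ∀ g : Γ, ((fun w : Xt => g • w) '' V ∩ V).Nonempty → g = 1
  quotient_p : Topology.IsQuotientMap p
  fiber_eq : ∀ a b : Xt, p a = p b ↔ ∃ g : Γ, g • a = b

noncomputable def loopClass {X : Type*} [TopologicalSpace X] {x : X} (γ : Path x x) :
    FundamentalGroup X x :=
  FundamentalGroup.fromPath (⟦γ⟧ : Path.Homotopic.Quotient x x)

open Set MulAction

noncomputable def MulAction.equivQuotientStabilizer (G : Type*) {α : Type*} [Group G]
    [MulAction G α] [IsPretransitive G α] (a : α) : α ≃ G ⧸ stabilizer G a :=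
  (Equiv.Set.univ α).symm.trans <|
    (Equiv.setCongr (orbit_eq_univ G a)).symm.trans (orbitEquivQuotientStabilizer G a)

namespace ConnectedComponents

variable {G E : Type*} [Group G] [TopologicalSpace E] [MulAction G E] [ContinuousConstSMul G E]

instance : MulAction G (ConnectedComponents E) where
  smul g := (continuous_const_smul g).connectedComponentsMap
  one_smul c := by
    obtain ⟨e, rfl⟩ := surjective_coe c
    exact congrArg mk (one_smul G e)
  mul_smul g h c := by
    obtain ⟨e, rfl⟩ := surjective_coe c
    exact congrArg mk (mul_smul g h e)

theorem smul_mk (g : G) (e : E) : g • mk e = mk (g • e) := rfl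

theorem image_smul_preimage_singleton (g : G) (c : ConnectedComponents E) :
    (fun e : E => g • e) '' (mk ⁻¹' {c}) = mk ⁻¹' {g • c} := by
  ext e
  rw [image_smul, mem_smul_set_iff_inv_smul_mem, mem_preimage, mem_preimage, mem_singleton_iff,
    mem_singleton_iff, ← smul_mk, inv_smul_eq_iff]

end ConnectedComponents

namespace IsCoveringMap

variable {E X : Type*} [TopologicalSpace E] [TopologicalSpace X] {p : E → X}

theorem exists_path_lift (hp : IsCoveringMap p) {x y : X} (γ : Path x y) (e : E) (he : p e = x) :
    ∃ (e' : E) (γt : Path e e'), ∀ t, p (γt t) = γ t := by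
  obtain ⟨Γ, hΓ, hΓ₀⟩ := hp.exists_path_lifts γ.toContinuousMap e (by simp [he])
  exact ⟨Γ 1, ⟨Γ, hΓ₀, rfl⟩, congrFun hΓ⟩

theorem image_pathComponent_eq_univ [PathConnectedSpace X] (hp : IsCoveringMap p) (e : E) :
    p '' pathComponent e = univ := by
  refine eq_univ_of_forall fun y => ?_
  obtain ⟨e', γt, hγt⟩ := hp.exists_path_lift (PathConnectedSpace.somePath (p e) y) e rfl
  exact ⟨e', ⟨γt⟩, by simpa using hγt 1⟩

theorem image_connectedComponent_eq_univ [PathConnectedSpace X] (hp : IsCoveringMap p) (e : E) :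
    p '' connectedComponent e = univ :=
  eq_univ_of_univ_subset <|
    hp.image_pathComponent_eq_univ e ▸ image_mono (pathComponent_subset_component e)

end IsCoveringMap

theorem loopClass_surjective {X : Type*} [TopologicalSpace X] (x : X) :
    Function.Surjective (loopClass (x := x)) := fun q =>
  let ⟨γ, hγ⟩ := Quotient.exists_rep (FundamentalGroup.toPath q)
  ⟨γ, congrArg FundamentalGroup.fromPath hγ⟩

section MonodromyAction

variable {G E X : Type*} [Group G] [TopologicalSpace E] [TopologicalSpace X] [MulAction G E]
  [ContinuousConstSMul G E] {p : E → X}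

theorem IsCoveringMap.isPretransitive_connectedComponents [PathConnectedSpace X]
    (hp : IsCoveringMap p) (hfib : ∀ a b, p a = p b → ∃ g : G, g • a = b) :
    IsPretransitive G (ConnectedComponents E) := by
  refine ⟨fun c₁ c₂ => ?_⟩
  obtain ⟨e₁, rfl⟩ := ConnectedComponents.surjective_coe c₁
  obtain ⟨e₂, rfl⟩ := ConnectedComponents.surjective_coe c₂
  obtain ⟨e, he, hpe⟩ : p e₂ ∈ p '' connectedComponent e₁ := by
    rw [hp.image_connectedComponent_eq_univ]; trivial
  obtain ⟨g, rfl⟩ := hfib e e₂ hpe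
  exact ⟨g, by rw [← ConnectedComponents.coe_eq_coe'.mpr he]; rfl⟩

def IsMonodromy (p : E → X) {x : X} (e : E) (μ : FundamentalGroup X x →* G) : Prop :=
  ∀ (γ : Path x x) (z : E) (γt : Path e z), (∀ t, p (γt t) = γ t) → μ (loopClass γ) • z = e

namespace IsMonodromy

variable {x : X} {e : E} {μ : FundamentalGroup X x →* G}

theorem range_le_stabilizer (hμ : IsMonodromy p e μ) (hp : IsCoveringMap p) (he : p e = x) :
    μ.range ≤ stabilizer G (ConnectedComponents.mk e) := by
  rintro _ ⟨q, rfl⟩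
  obtain ⟨γ, rfl⟩ := loopClass_surjective x q
  obtain ⟨z, γt, hγt⟩ := hp.exists_path_lift γ e he
  have hz : ConnectedComponents.mk z = ConnectedComponents.mk e :=
    ConnectedComponents.coe_eq_coe'.mpr (pathComponent_subset_component e ⟨γt⟩)
  rw [mem_stabilizer_iff, ← hz, ConnectedComponents.smul_mk, hμ γ z γt hγt, hz]

theorem stabilizer_le_range [LocallyPathConnectedSpace E] [IsCancelSMul G E]
    (hμ : IsMonodromy p e μ) (hp : Continuous p) (hp_smul : ∀ (g : G) a, p (g • a) = p a)
    (he : p e = x) : stabilizer G (ConnectedComponents.mk e) ≤ μ.range := by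
  intro g hg
  have hge : g • e ∈ pathComponent e := by
    rw [pathComponent_eq_connectedComponent, ← ConnectedComponents.coe_eq_coe']
    exact hg
  obtain ⟨δ⟩ := hge
  let γ : Path x x := (δ.map hp).cast he.symm (by rw [hp_smul, he])
  have hloop : (μ (loopClass γ) * g) • e = e := by
    rw [mul_smul]
    exact hμ γ (g • e) δ fun _ => rfl
  rw [eq_inv_of_mul_eq_one_right (IsCancelSMul.eq_one_of_smul hloop)]
  exact inv_mem ⟨loopClass γ, rfl⟩

theorem stabilizer_eq_range [LocallyPathConnectedSpace E] [IsCancelSMul G E]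
    (hμ : IsMonodromy p e μ) (hp : IsCoveringMap p) (hp_smul : ∀ (g : G) a, p (g • a) = p a)
    (he : p e = x) : stabilizer G (ConnectedComponents.mk e) = μ.range :=
  le_antisymm (hμ.stabilizer_le_range hp.continuous hp_smul he) (hμ.range_le_stabilizer hp he)

end IsMonodromy

end MonodromyAction

theorem GammaCovering.isQuotientCoveringMap {Γ Xt X : Type*} [Group Γ] [TopologicalSpace Xt]
    [TopologicalSpace X] [MulAction Γ Xt] [LocallyPathConnectedSpace X]
    (hc : GammaCovering Γ Xt X) : IsQuotientCoveringMap hc.p Γ where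
  __ := hc.quotient_p
  continuous_const_smul := hc.continuous_smul
  apply_eq_iff_mem_orbit {a b} := eq_comm.trans (hc.fiber_eq b a)
  disjoint e :=
    let ⟨V, hVo, heV, hV⟩ := hc.covering_action e
    ⟨V, hVo.mem_nhds heV, hV⟩

/-- Let `μ : π₁(X,x) → Γ` be a monodromy homomorphism of the
`Γ`-covering `p` (with base point `lam x` in the fibre over `x`), and `Γ′ = range μ`.
Then the restriction of `p` to each connected component of `X̃` is surjective onto `X`,
any two connected components are related by the action of some `g ∈ Γ` (so the restricted
coverings are pairwise isomorphic `Γ′`-coverings), and the set of connected components of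
`X̃` is in bijection with the left cosets `Γ ⧸ Γ′`. -/
theorem components_biject_with_cosets
    {Γ : Type*} [Group Γ] {Xt X : Type*}
    [TopologicalSpace Xt] [TopologicalSpace X] [MulAction Γ Xt]
    [LocallyPathConnectedSpace X] [LocallyPathConnectedSpace Xt] [PathConnectedSpace X]
    (hc : GammaCovering Γ Xt X) (x : X) (lam : X → Xt) (hlam : ∀ y, hc.p (lam y) = y)
    (μ : FundamentalGroup X x →* Γ)
    (hμ : ∀ (γ : Path x x) (z : Xt) (γt : Path (lam x) z),
        (∀ t, hc.p (γt t) = γ t) → μ (loopClass γ) • z = lam x) :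
    (∀ c : ConnectedComponents Xt, hc.p '' (ConnectedComponents.mk ⁻¹' {c}) = Set.univ) ∧
    (∀ c₁ c₂ : ConnectedComponents Xt, ∃ g : Γ,
        (fun z : Xt => g • z) '' (ConnectedComponents.mk ⁻¹' {c₁}) =
          ConnectedComponents.mk ⁻¹' {c₂}) ∧
    Nonempty (ConnectedComponents Xt ≃ (Γ ⧸ μ.range)) := by
  have hq := hc.isQuotientCoveringMap
  have := hq.toContinuousConstSMul
  have := hq.isCancelSMul
  have hp := hq.isCoveringMap
  have := hp.isPretransitive_connectedComponents fun a b => (hc.fiber_eq a b).mp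
  have hstab : stabilizer Γ (ConnectedComponents.mk (lam x)) = μ.range :=
    IsMonodromy.stabilizer_eq_range hμ hp hq.map_smul (hlam x)
  refine ⟨fun c => ?_, fun c₁ c₂ => ?_, ⟨?_⟩⟩
  · obtain ⟨z, rfl⟩ := ConnectedComponents.surjective_coe c
    rw [connectedComponents_preimage_singleton]
    exact hp.image_connectedComponent_eq_univ z
  · obtain ⟨g, rfl⟩ := exists_smul_eq Γ c₁ c₂
    exact ⟨g, ConnectedComponents.image_smul_preimage_singleton g c₁⟩
  · exact (equivQuotientStabilizer Γ _).trans (Subgroup.quotientEquivOfEq hstab)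
end

section
/- Let p : X̃ → X be the pullback (induced covering) of a Γ-covering p : Ỹ → Y along a continuous map f : X → Y, with X path-connected, and let f_♯ : X̃ → Ỹ be the canonical projection. Suppose pseudo-sections λ_Y : Y → Ỹ and λ : X → X̃ satisfy f_♯(λ(x₀)) = λ_Y(f(x₀)) at some point x₀. Then the monodromy of the induced covering equals the pullback of the monodromy of p, i.e. μ_λ = μ_{λ_Y} ∘ Π(f), if and only if f_♯ ∘ λ = λ_Y ∘ f everywhere. -/
variable {Γ : Type*} [Group Γ] {Yt Y X : Type*}
  [TopologicalSpace Yt] [TopologicalSpace Y] [TopologicalSpace X] [MulAction Γ Yt]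
  [LocallyPathConnectedSpace Y]

/-- Total space of the pullback of the covering `p : Ỹ → Y` along `f : X → Y`. -/
def Pullback (p : Yt → Y) (f : X → Y) : Type _ :=
  {q : X × Yt // f q.1 = p q.2}

instance (p : Yt → Y) (f : X → Y) : TopologicalSpace (Pullback p f) :=
  instTopologicalSpaceSubtype

/-- The `Γ`-action on the pullback, acting on the second coordinate. -/
noncomputable instance pullbackSMul (hc : GammaCovering Γ Yt Y) (f : X → Y) :
    SMul Γ (Pullback hc.p f) where
  smul g q := ⟨(q.1.1, g • q.1.2), by
    rw [q.2, (hc.fiber_eq (g • q.1.2) q.1.2).mpr ⟨g⁻¹, inv_smul_smul g _⟩]⟩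

/-- The projection `f_♯` from the pullback to `Ỹ`. -/
def fSharp (p : Yt → Y) (f : X → Y) : Pullback p f → Yt := fun q => q.1.2

/-- The induced covering map `f* p` from the pullback to `X`. -/
def fStarP (p : Yt → Y) (f : X → Y) : Pullback p f → X := fun q => q.1.1

namespace GammaCovering

theorem eq_one_of_smul_eq_self (hc : GammaCovering Γ Yt Y) {g : Γ} {a : Yt} (h : g • a = a) :
    g = 1 := by
  obtain ⟨V, -, haV, hV⟩ := hc.covering_action a
  exact hV g ⟨a, ⟨a, haV, h⟩, haV⟩

theorem eq_of_smul_eq_smul (hc : GammaCovering Γ Yt Y) {g h : Γ} {a : Yt}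
    (hgh : g • a = h • a) : g = h := by
  have : (h⁻¹ * g) • a = a := by rw [mul_smul, hgh, inv_smul_smul]
  exact (inv_mul_eq_one.mp (hc.eq_one_of_smul_eq_self this)).symm

theorem isLocallyInjective (hc : GammaCovering Γ Yt Y) : IsLocallyInjective hc.p := by
  intro z
  obtain ⟨V, hV, hzV, hfree⟩ := hc.covering_action z
  refine ⟨V, hV, hzV, fun a ha b hb hab => ?_⟩
  obtain ⟨g, rfl⟩ := (hc.fiber_eq a b).mp hab
  rw [hfree g ⟨g • a, ⟨a, ha, rfl⟩, hb⟩, one_smul]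

theorem isSeparatedMap (hc : GammaCovering Γ Yt Y) : IsSeparatedMap hc.p := by
  intro a b hab hne
  obtain ⟨g, rfl⟩ := (hc.fiber_eq a b).mp hab
  obtain ⟨V, hV, haV, hfree⟩ := hc.covering_action a
  refine ⟨V, (fun w => g⁻¹ • w) ⁻¹' V, hV, hV.preimage (hc.continuous_smul g⁻¹), haV,
    by simpa using haV, Set.disjoint_left.mpr fun w hwV hwgV => hne ?_⟩
  have hg : g⁻¹ = 1 := hfree g⁻¹ ⟨g⁻¹ • w, ⟨w, hwV, rfl⟩, hwgV⟩
  rw [inv_eq_one.mp hg, one_smul]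

theorem eq_of_comp_eq (hc : GammaCovering Γ Yt Y) {Z : Type*} [TopologicalSpace Z]
    [PreconnectedSpace Z] {δ δ' : Z → Yt} (hδ : Continuous δ) (hδ' : Continuous δ')
    (hp : hc.p ∘ δ = hc.p ∘ δ') (z : Z) (hz : δ z = δ' z) : δ = δ' :=
  hc.isSeparatedMap.eq_of_comp_eq hc.isLocallyInjective hδ hδ' hp z hz

end GammaCovering

theorem fSharp_target_eq_of_lift (hc : GammaCovering Γ Yt Y) {f : X → Y}
    {u v : Pullback hc.p f} {a b : Yt} (γ : Path u v) (δ : Path a b)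
    (hδ : ∀ t, hc.p (δ t) = f (fStarP hc.p f (γ t))) (hu : fSharp hc.p f u = a) :
    fSharp hc.p f v = b := by
  have hlift : fSharp hc.p f ∘ γ = δ :=
    hc.eq_of_comp_eq (continuous_snd.comp (continuous_subtype_val.comp γ.continuous))
      δ.continuous (funext fun t => (γ t).2.symm.trans (hδ t).symm) 0
      (by simp only [Function.comp_apply, Path.source, hu])
  simpa only [Function.comp_apply, Path.target] using congrFun hlift 1

theorem pullback_monodromy_iff_compatible_sections_general
    [PathConnectedSpace X]
    (hc : GammaCovering Γ Yt Y) (f : X → Y) (hf : Continuous f)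
    (lamY : Y → Yt)
    (lam : X → Pullback hc.p f)
    (μX : ∀ x y : X, Path.Homotopic.Quotient x y → Γ)
    (μY : ∀ a b : Y, Path.Homotopic.Quotient a b → Γ)
    (hμX : ∀ (x y : X) (γ : Path x y),
        ∃ γt : Path (lam x) ((μX x y ⟦γ⟧) • lam y), ∀ t, fStarP hc.p f (γt t) = γ t)
    (hμY : ∀ (a b : Y) (δ : Path a b),
        ∃ δt : Path (lamY a) ((μY a b ⟦δ⟧) • lamY b), ∀ t, hc.p (δt t) = δ t)
    (x₀ : X) (h₀ : fSharp hc.p f (lam x₀) = lamY (f x₀)) :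
    (∀ (x y : X) (γ : Path x y), μX x y ⟦γ⟧ = μY (f x) (f y) ⟦γ.map hf⟧) ↔
      (∀ x : X, fSharp hc.p f (lam x) = lamY (f x)) := by
  have transport : ∀ (x y : X) (γ : Path x y), fSharp hc.p f (lam x) = lamY (f x) →
      μX x y ⟦γ⟧ • fSharp hc.p f (lam y) =
        μY (f x) (f y) ⟦γ.map hf⟧ • lamY (f y) := by
    intro x y γ hx
    obtain ⟨γt, hγt⟩ := hμX x y γ
    obtain ⟨δt, hδt⟩ := hμY (f x) (f y) (γ.map hf)
    exact fSharp_target_eq_of_lift hc γt δt (fun t => by rw [hδt, hγt]; rfl) hx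
  constructor
  · intro hmono x
    obtain ⟨γ⟩ := PathConnectedSpace.joined x₀ x
    have h := transport x₀ x γ h₀
    rw [← hmono] at h
    exact MulAction.injective _ h
  · intro hcompat x y γ
    have h := transport x y γ (hcompat x)
    rw [hcompat y] at h
    exact hc.eq_of_smul_eq_smul h

/-- Let `lam` be a pseudo-section of the induced covering `f* p` and
`lamY` one of `p`, with monodromies `μX` and `μY` (characterised via path lifting), that
agree over some point `x₀` : `f_♯ (lam x₀) = lamY (f x₀)`. Then
`μX = μY ∘ Π f` (i.e. `μX ⟦γ⟧ = μY ⟦f ∘ γ⟧` for all paths `γ` in `X`) if and only if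
`f_♯ ∘ lam = lamY ∘ f` everywhere. -/
theorem pullback_monodromy_iff_compatible_sections
    [PathConnectedSpace X]
    (hc : GammaCovering Γ Yt Y) (f : X → Y) (hf : Continuous f)
    (lamY : Y → Yt) (hlamY : ∀ y, hc.p (lamY y) = y)
    (lam : X → Pullback hc.p f) (hlam : ∀ x, fStarP hc.p f (lam x) = x)
    (μX : ∀ x y : X, Path.Homotopic.Quotient x y → Γ)
    (μY : ∀ a b : Y, Path.Homotopic.Quotient a b → Γ)
    (hμX : ∀ (x y : X) (γ : Path x y),
        ∃ γt : Path (lam x) ((μX x y ⟦γ⟧) • lam y), ∀ t, fStarP hc.p f (γt t) = γ t)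
    (hμY : ∀ (a b : Y) (δ : Path a b),
        ∃ δt : Path (lamY a) ((μY a b ⟦δ⟧) • lamY b), ∀ t, hc.p (δt t) = δ t)
    (x₀ : X) (h₀ : fSharp hc.p f (lam x₀) = lamY (f x₀)) :
    (∀ (x y : X) (γ : Path x y), μX x y ⟦γ⟧ = μY (f x) (f y) ⟦γ.map hf⟧) ↔
      (∀ x : X, fSharp hc.p f (lam x) = lamY (f x)) :=
  pullback_monodromy_iff_compatible_sections_general hc f hf lamY lam μX μY hμX hμY x₀ h₀
end

section
/- Let M be a complete Riemannian manifold and let γ : [0,s] → M and γ̃ : [0,s̃] → M be minimising geodesics parametrised by arc length with the same starting point γ(0) = γ̃(0) = x, endpoints y = γ(s), ỹ = γ̃(s̃), and s ≤ s̃. Then either the image of γ is contained in the image of γ̃, or the images intersect only in {x, y} and in the latter nontrivial case y = ỹ. -/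
/-!
STATEMENT 17 (Intersection Lemma): Two minimising geodesics `γ : [0,s] → M`,
`γ̃ : [0,s̃] → M` in a complete Riemannian manifold with the same starting point `x` and
`s ≤ s̃` either satisfy `image γ ⊆ image γ̃`, or their images intersect only in `{x, y}`,
and in the latter nontrivial case (the intersection containing `y`) one has `y = ỹ`.

The Riemannian structure is axiomatised metrically: minimising geodesics are rigid
(uniqueness of solutions of the geodesic equation): two minimising geodesics from the same
point that agree on a nondegenerate subinterval agree on their common domain.
-/

def IsMinGeodesic {M : Type*} [MetricSpace M] (γ : ℝ → M) (x y : M) : Prop :=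
  γ 0 = x ∧ γ (dist x y) = y ∧
    ∀ s ∈ Set.Icc (0 : ℝ) (dist x y), ∀ t ∈ Set.Icc (0 : ℝ) (dist x y),
      dist (γ s) (γ t) = |s - t|

lemma isMinGeodesic_param {M : Type*} [MetricSpace M] {γ : ℝ → M} {x y : M}
    (h : IsMinGeodesic γ x y) {u : ℝ} (hu : u ∈ Set.Icc (0:ℝ) (dist x y)) :
    dist x (γ u) = u := by
  obtain ⟨h0, _, hd⟩ := h
  have := hd 0 ⟨le_refl 0, dist_nonneg⟩ u hu
  rw [h0] at this
  rw [this, abs_of_nonpos (by linarith [hu.1])]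
  ring

lemma concat_isMinGeodesic {M : Type*} [MetricSpace M] {x y yt : M} {γ γt : ℝ → M}
    (hγ : IsMinGeodesic γ x y) (hγt : IsMinGeodesic γt x yt)
    (hs : dist x y ≤ dist x yt) {s : ℝ} (hs0 : 0 ≤ s) (hsd : s ≤ dist x y)
    (hst : s ≤ dist x yt) (heq : γ s = γt s) :
    IsMinGeodesic (fun t => if t ≤ s then γ t else γt t) x yt := by
  obtain ⟨hγ0, hγd, hγdist⟩ := hγ
  obtain ⟨hγt0, hγtd, hγtdist⟩ := hγt
  have key : ∀ a ∈ Set.Icc (0:ℝ) (dist x yt), ∀ b ∈ Set.Icc (0:ℝ) (dist x yt),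
      a ≤ s → ¬ b ≤ s → dist (γ a) (γt b) = |a - b| := by
    intro a ha b hb has hbs
    push_neg at hbs
    have hab : a ≤ b := has.trans hbs.le
    have h1 : dist (γ a) (γt b) ≤ b - a := by
      have t1 : dist (γ a) (γ s) = s - a := by
        rw [hγdist a ⟨ha.1, has.trans hsd⟩ s ⟨hs0, hsd⟩, abs_of_nonpos (by linarith)]; ring
      have t2 : dist (γt s) (γt b) = b - s := by
        rw [hγtdist s ⟨hs0, hst⟩ b hb, abs_of_nonpos (by linarith)]; ring
      calc dist (γ a) (γt b) ≤ dist (γ a) (γ s) + dist (γt s) (γt b) := by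
              rw [heq]; exact dist_triangle _ _ _
        _ = b - a := by rw [t1, t2]; ring
    have h2 : b - a ≤ dist (γ a) (γt b) := by
      have t3 : dist x (γt b) = b := by
        have := hγtdist 0 ⟨le_refl 0, dist_nonneg⟩ b hb
        rw [hγt0] at this
        rw [this, abs_of_nonpos (by linarith [hb.1])]; ring
      have t4 : dist x (γ a) = a := by
        have := hγdist 0 ⟨le_refl 0, dist_nonneg⟩ a ⟨ha.1, has.trans hsd⟩
        rw [hγ0] at this
        rw [this, abs_of_nonpos (by linarith [ha.1])]; ring
      have := dist_triangle x (γ a) (γt b)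
      rw [t3, t4] at this; linarith
    rw [abs_of_nonpos (by linarith)]
    linarith
  refine ⟨by simp [hs0, hγ0], ?_, ?_⟩
  · by_cases h : dist x yt ≤ s
    · have : s = dist x yt := le_antisymm hst h
      simp only [h, if_true]
      rw [this] at heq
      rw [heq, hγtd]
    · simp [h, hγtd]
  · intro a ha b hb
    by_cases has : a ≤ s <;> by_cases hbs : b ≤ s <;> simp only [has, hbs, if_true, if_false]
    · exact hγdist a ⟨ha.1, has.trans hsd⟩ b ⟨hb.1, hbs.trans hsd⟩
    · exact key a ha b hb has hbs
    · rw [dist_comm, abs_sub_comm]; exact key b hb a ha hbs has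
    · exact hγtdist a ha b hb

/-- Let `γ, γ̃` be minimising geodesics (parametrised by arc length)
from `x` to `y`, resp. from `x` to `ỹ`, with `d(x,y) ≤ d(x,ỹ)`.  Assume the Riemannian
rigidity of geodesics (`h_rigid`).  Then either the image of `γ` is contained in the image
of `γ̃`, or the two images intersect only inside `{x, y}`, and in the latter case, if the
intersection contains `y`, then `y = ỹ`. -/
theorem min_geodesic_intersection
    {M : Type*} [MetricSpace M]
    (h_rigid : ∀ (x y₁ y₂ : M) (γ₁ γ₂ : ℝ → M),
        IsMinGeodesic γ₁ x y₁ → IsMinGeodesic γ₂ x y₂ →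
        (∃ a b : ℝ, 0 ≤ a ∧ a < b ∧ b ≤ min (dist x y₁) (dist x y₂) ∧
            ∀ t ∈ Set.Icc a b, γ₁ t = γ₂ t) →
        ∀ t ∈ Set.Icc (0 : ℝ) (min (dist x y₁) (dist x y₂)), γ₁ t = γ₂ t)
    {x y yt : M} (γ γt : ℝ → M)
    (hγ : IsMinGeodesic γ x y) (hγt : IsMinGeodesic γt x yt)
    (hs : dist x y ≤ dist x yt) :
    γ '' Set.Icc 0 (dist x y) ⊆ γt '' Set.Icc 0 (dist x yt) ∨
      ((γ '' Set.Icc 0 (dist x y)) ∩ (γt '' Set.Icc 0 (dist x yt)) ⊆ {x, y} ∧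
        (y ∈ (γ '' Set.Icc 0 (dist x y)) ∩ (γt '' Set.Icc 0 (dist x yt)) ∧ y ≠ x →
          y = yt)) := by
  by_cases hA : ∃ s, 0 < s ∧ s < dist x yt ∧ s ≤ dist x y ∧ γ s = γt s
  · -- left disjunct: γ = γt on [0, dist x y]
    obtain ⟨s, hs0, hst, hsd, heq⟩ := hA
    set δ : ℝ → M := fun t => if t ≤ s then γ t else γt t with hδdef
    have hδ : IsMinGeodesic δ x yt :=
      concat_isMinGeodesic hγ hγt hs hs0.le hsd hst.le heq
    have hδγt : ∀ t ∈ Set.Icc (0:ℝ) (min (dist x yt) (dist x yt)), δ t = γt t := by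
      refine h_rigid x yt yt δ γt hδ hγt ⟨s, dist x yt, hs0.le, hst,
        le_min le_rfl le_rfl, ?_⟩
      intro t ht
      by_cases h : t ≤ s
      · have : t = s := le_antisymm h ht.1
        simp only [hδdef, this, if_true, le_refl, heq]
      · simp [hδdef, h]
    have hfull : ∀ t ∈ Set.Icc (0:ℝ) (min (dist x y) (dist x yt)), γ t = γt t := by
      refine h_rigid x y yt γ γt hγ hγt ⟨0, s, le_rfl, hs0,
        le_min hsd hst.le, ?_⟩
      intro t ht
      have h1 : δ t = γt t := hδγt t ⟨ht.1, by rw [min_self]; linarith [ht.2]⟩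
      simpa [hδdef, ht.2] using h1
    left
    rintro p ⟨u, hu, rfl⟩
    have : u ∈ Set.Icc (0:ℝ) (min (dist x y) (dist x yt)) := by
      rw [min_eq_left hs]; exact hu
    exact ⟨u, ⟨hu.1, hu.2.trans hs⟩, (hfull u this).symm⟩
  · push_neg at hA
    right
    constructor
    · rintro p ⟨⟨u, hu, rfl⟩, ⟨v, hv, hvp⟩⟩
      have huv : u = v := by
        rw [← isMinGeodesic_param hγ hu, ← hvp, isMinGeodesic_param hγt hv]
      subst huv
      rcases eq_or_lt_of_le hu.1 with h0 | h0
      · left; rw [← h0, hγ.1]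
      · have heq : γ u = γt u := hvp.symm
        have := hA u h0 -- : u < dist x yt → u ≤ dist x y → γ u ≠ γt u
        have hud : ¬ u < dist x yt := fun h => this h hu.2 heq
        push_neg at hud
        have : u = dist x y := le_antisymm hu.2 ((hs.trans hud))
        right
        rw [this, hγ.2.1]; rfl
    · rintro ⟨⟨_, ⟨v, hv, hvy⟩⟩, hyx⟩
      have hvd : v = dist x y := by
        have := isMinGeodesic_param hγt hv
        rw [hvy] at this
        exact this.symm
      have hv0 : 0 < v := by
        rw [hvd]; exact dist_pos.mpr (fun h => hyx h.symm)
      have h1 : γ v = y := by rw [hvd]; exact hγ.2.1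
      have heq : γ v = γt v := h1.trans hvy.symm
      have hud : ¬ v < dist x yt := fun h => hA v hv0 h (le_of_eq hvd) heq
      push_neg at hud
      have : v = dist x yt := le_antisymm hv.2 hud
      rw [← hvy, this, hγt.2.1]
end

section
/- Let X = {x₀, x₁, x₂, x₃} be four points in a metric space. The Vietoris–Rips filtration of X has at most one nontrivial 1-dimensional persistent homology class, and such a class with persistence interval [b, d), b < d, exists if and only if the points can be labelled so that d(x₀,x₁) ≥ d(x₂,x₃) = d > b = max{ d(x_i,x_j) : i ∈ {0,1}, j ∈ {2,3} }. -/
/-!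
STATEMENT 18: The Vietoris–Rips filtration of a four-point metric space has at most one
nontrivial 1-dimensional persistent homology class; such a class with persistence interval
`[b, d)`, `b < d`, exists iff the points can be labelled `x₀, x₁, x₂, x₃` so that
`d(x₀,x₁) ≥ d(x₂,x₃) = d > b = max{d(x_i,x_j) : i ∈ {0,1}, j ∈ {2,3}}`.

Since the Vietoris–Rips complex at scale `ε` is the flag complex of the `ε`-neighbourhood
graph, for `4` points its first homology is nontrivial precisely when that graph is a
cycle graph on the four vertices (`VRCycleAt`), and the (unique) persistent class has
interval `[b,d)` exactly when `{ε | VRCycleAt ε} = [b, d)`.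
-/

variable {M : Type*} [MetricSpace M]

/-- The `ε`-Vietoris–Rips complex on the four points `x 0, …, x 3` has a (necessarily
unique) nontrivial 1-dimensional homology class: the `ε`-neighbourhood graph is a cycle
graph on the four points. -/
def VRCycleAt (x : Fin 4 → M) (ε : ℝ) : Prop :=
  ∃ σ : Equiv.Perm (Fin 4),
    dist (x (σ 0)) (x (σ 2)) ≤ ε ∧ dist (x (σ 2)) (x (σ 1)) ≤ ε ∧
    dist (x (σ 1)) (x (σ 3)) ≤ ε ∧ dist (x (σ 3)) (x (σ 0)) ≤ ε ∧
    ε < dist (x (σ 0)) (x (σ 1)) ∧ ε < dist (x (σ 2)) (x (σ 3))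

/-- `{a,b}` is a "cross" pair for the matching `{{σ0,σ1},{σ2,σ3}}`. -/
def VRcross (σ : Equiv.Perm (Fin 4)) (a b : Fin 4) : Prop :=
  ((a = σ 0 ∨ a = σ 1) ∧ (b = σ 2 ∨ b = σ 3)) ∨ ((a = σ 2 ∨ a = σ 3) ∧ (b = σ 0 ∨ b = σ 1))

/-- `{a,b}` is one of the matched pairs `{σ0,σ1}`, `{σ2,σ3}`. -/
def VRpair (σ : Equiv.Perm (Fin 4)) (a b : Fin 4) : Prop :=
  (a = σ 0 ∧ b = σ 1) ∨ (a = σ 1 ∧ b = σ 0) ∨ (a = σ 2 ∧ b = σ 3) ∨ (a = σ 3 ∧ b = σ 2)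

instance (σ : Equiv.Perm (Fin 4)) (a b : Fin 4) : Decidable (VRcross σ a b) := by
  unfold VRcross; infer_instance
instance (σ : Equiv.Perm (Fin 4)) (a b : Fin 4) : Decidable (VRpair σ a b) := by
  unfold VRpair; infer_instance

set_option maxHeartbeats 1000000 in
/-- Combinatorial key: for two perfect matchings of four points, either they coincide
(so all σ-crosses are τ-crosses and σ-pairs are τ-pairs), or each contains a cross pair
of the other. -/
lemma VRkey : ∀ σ τ : Equiv.Perm (Fin 4),
    (VRcross τ (σ 0) (σ 2) ∧ VRcross τ (σ 0) (σ 3) ∧ VRcross τ (σ 1) (σ 2) ∧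
      VRcross τ (σ 1) (σ 3) ∧ VRpair τ (σ 0) (σ 1) ∧ VRpair τ (σ 2) (σ 3))
    ∨ (VRcross σ (τ 0) (τ 1) ∧ VRcross τ (σ 0) (σ 1)) := by decide

noncomputable def VRb (x : Fin 4 → M) (σ : Equiv.Perm (Fin 4)) : ℝ :=
  max (max (dist (x (σ 0)) (x (σ 2))) (dist (x (σ 0)) (x (σ 3))))
      (max (dist (x (σ 1)) (x (σ 2))) (dist (x (σ 1)) (x (σ 3))))

noncomputable def VRd (x : Fin 4 → M) (σ : Equiv.Perm (Fin 4)) : ℝ :=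
  min (dist (x (σ 0)) (x (σ 1))) (dist (x (σ 2)) (x (σ 3)))

lemma VRcond_iff (x : Fin 4 → M) (σ : Equiv.Perm (Fin 4)) (ε : ℝ) :
    (dist (x (σ 0)) (x (σ 2)) ≤ ε ∧ dist (x (σ 2)) (x (σ 1)) ≤ ε ∧
     dist (x (σ 1)) (x (σ 3)) ≤ ε ∧ dist (x (σ 3)) (x (σ 0)) ≤ ε ∧
     ε < dist (x (σ 0)) (x (σ 1)) ∧ ε < dist (x (σ 2)) (x (σ 3)))
    ↔ ε ∈ Set.Ico (VRb x σ) (VRd x σ) := by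
  simp only [VRb, VRd, Set.mem_Ico, max_le_iff, lt_min_iff,
    dist_comm (x (σ 2)) (x (σ 1)), dist_comm (x (σ 3)) (x (σ 0))]
  tauto

lemma VRcross_le {x : Fin 4 → M} {τ : Equiv.Perm (Fin 4)} {ε : ℝ}
    (h1 : dist (x (τ 0)) (x (τ 2)) ≤ ε) (h2 : dist (x (τ 2)) (x (τ 1)) ≤ ε)
    (h3 : dist (x (τ 1)) (x (τ 3)) ≤ ε) (h4 : dist (x (τ 3)) (x (τ 0)) ≤ ε)
    {a b : Fin 4} (h : VRcross τ a b) : dist (x a) (x b) ≤ ε := by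
  rw [dist_comm] at h2 h4
  rcases h with ⟨ha | ha, hb | hb⟩ | ⟨ha | ha, hb | hb⟩ <;> subst ha <;> subst hb <;>
    first
      | assumption
      | (rw [dist_comm]; assumption)

lemma VRpair_lt {x : Fin 4 → M} {τ : Equiv.Perm (Fin 4)} {ε : ℝ}
    (h5 : ε < dist (x (τ 0)) (x (τ 1))) (h6 : ε < dist (x (τ 2)) (x (τ 3)))
    {a b : Fin 4} (h : VRpair τ a b) : ε < dist (x a) (x b) := by
  rcases h with ⟨ha, hb⟩ | ⟨ha, hb⟩ | ⟨ha, hb⟩ | ⟨ha, hb⟩ <;> subst ha <;> subst hb <;>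
    first
      | assumption
      | (rw [dist_comm]; assumption)

/-- Master lemma: if the cycle conditions hold for `σ` at some scale, then the set of all
scales at which the VR complex is a cycle is exactly `[VRb σ, VRd σ)`. -/
lemma VRmaster {x : Fin 4 → M} {ε₀ : ℝ} {σ : Equiv.Perm (Fin 4)}
    (h : ε₀ ∈ Set.Ico (VRb x σ) (VRd x σ)) :
    {ε : ℝ | VRCycleAt x ε} = Set.Ico (VRb x σ) (VRd x σ) := by
  ext ε
  simp only [Set.mem_setOf_eq]
  constructor
  · rintro ⟨τ, h1, h2, h3, h4, h5, h6⟩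
    obtain ⟨s1, s2, s3, s4, s5, s6⟩ := (VRcond_iff x σ ε₀).2 h
    rcases VRkey σ τ with ⟨c1, c2, c3, c4, p1, p2⟩ | ⟨cσ, cτ⟩
    · refine (VRcond_iff x σ ε).1 ⟨VRcross_le h1 h2 h3 h4 c1, ?_,
        VRcross_le h1 h2 h3 h4 c4, ?_, VRpair_lt h5 h6 p1, VRpair_lt h5 h6 p2⟩
      · rw [dist_comm]; exact VRcross_le h1 h2 h3 h4 c3
      · rw [dist_comm]; exact VRcross_le h1 h2 h3 h4 c2
    · exfalso
      have hA : dist (x (τ 0)) (x (τ 1)) ≤ ε₀ := VRcross_le s1 s2 s3 s4 cσ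
      have hB : dist (x (σ 0)) (x (σ 1)) ≤ ε := VRcross_le h1 h2 h3 h4 cτ
      linarith
  · intro hε
    exact ⟨σ, (VRcond_iff x σ ε).2 hε⟩

/-- pair-swap permutation `0↔2, 1↔3`. -/
def VRpswap : Equiv.Perm (Fin 4) :=
  ⟨![2, 3, 0, 1], ![2, 3, 0, 1], by decide, by decide⟩

/-- For four points in a metric space: (at most one persistent class)
the set of scales at which the Vietoris–Rips complex has nontrivial first homology is
either empty or a half-open interval `[b, d)`; and it equals `[b, d)` with `b < d` iff the
points can be labelled so that
`d(x₀,x₁) ≥ d(x₂,x₃) = d > b = max_{i ∈ {0,1}, j ∈ {2,3}} d(x_i,x_j)`. -/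
theorem four_point_vietoris_rips (x : Fin 4 → M) (hx : Function.Injective x) :
    ({ε : ℝ | VRCycleAt x ε} = ∅ ∨
      ∃ b d : ℝ, b < d ∧ {ε : ℝ | VRCycleAt x ε} = Set.Ico b d) ∧
    ∀ b d : ℝ, b < d →
      ({ε : ℝ | VRCycleAt x ε} = Set.Ico b d ↔
        ∃ σ : Equiv.Perm (Fin 4),
          dist (x (σ 2)) (x (σ 3)) ≤ dist (x (σ 0)) (x (σ 1)) ∧
          dist (x (σ 2)) (x (σ 3)) = d ∧
          b = max (max (dist (x (σ 0)) (x (σ 2))) (dist (x (σ 0)) (x (σ 3))))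
                  (max (dist (x (σ 1)) (x (σ 2))) (dist (x (σ 1)) (x (σ 3)))) ∧
          b < d) := by
  constructor
  · rcases Set.eq_empty_or_nonempty {ε : ℝ | VRCycleAt x ε} with hS | ⟨ε₀, hε₀⟩
    · exact Or.inl hS
    · obtain ⟨σ, hc⟩ := hε₀
      have hm := (VRcond_iff x σ ε₀).1 hc
      exact Or.inr ⟨VRb x σ, VRd x σ, lt_of_le_of_lt hm.1 hm.2, VRmaster hm⟩
  · intro b d hbd
    constructor
    · intro hS
      have hbmem : b ∈ {ε : ℝ | VRCycleAt x ε} := by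
        rw [hS]; exact ⟨le_rfl, hbd⟩
      obtain ⟨σ, hc⟩ := hbmem
      have hm := (VRcond_iff x σ b).1 hc
      have hEq : Set.Ico b d = Set.Ico (VRb x σ) (VRd x σ) := hS.symm.trans (VRmaster hm)
      obtain ⟨hbv, hdv⟩ := (Set.Ico_eq_Ico_iff (Or.inl hbd)).1 hEq
      rcases le_total (dist (x (σ 2)) (x (σ 3))) (dist (x (σ 0)) (x (σ 1))) with h | h
      · refine ⟨σ, h, ?_, hbv.trans (by rw [VRb]), hbd⟩
        rw [hdv, VRd, min_eq_right h]
      · refine ⟨VRpswap.trans σ, ?_, ?_, ?_, hbd⟩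
        · simpa [VRpswap, Equiv.trans_apply] using h
        · have : (VRpswap.trans σ) 2 = σ 0 ∧ (VRpswap.trans σ) 3 = σ 1 := by
            constructor <;> rfl
          rw [this.1, this.2, hdv, VRd, min_eq_left h]
        · have e0 : (VRpswap.trans σ) 0 = σ 2 := rfl
          have e1 : (VRpswap.trans σ) 1 = σ 3 := rfl
          have e2 : (VRpswap.trans σ) 2 = σ 0 := rfl
          have e3 : (VRpswap.trans σ) 3 = σ 1 := rfl
          rw [e0, e1, e2, e3, hbv, VRb, dist_comm (x (σ 2)) (x (σ 0)),
            dist_comm (x (σ 2)) (x (σ 1)), dist_comm (x (σ 3)) (x (σ 0)),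
            dist_comm (x (σ 3)) (x (σ 1)), max_max_max_comm]
    · rintro ⟨σ, hle, hd, hb, _⟩
      have hdv : VRd x σ = d := by rw [VRd, min_eq_right hle, hd]
      have hbv : VRb x σ = b := by rw [VRb, hb]
      have hmem : b ∈ Set.Ico (VRb x σ) (VRd x σ) := by
        rw [hbv, hdv]; exact ⟨le_rfl, hbd⟩
      rw [VRmaster hmem, hbv, hdv]
end

section
/- Let M be a complete Riemannian manifold, let G be a minimal ε-cycle graph on a finite point set in M, and let f : |G| → M be a min-geodesic map. Then f fails to be a topological embedding if and only if G has exactly three vertices and one of the three points lies on the minimising geodesic between the other two. In particular, if G has at least four vertices then f is an embedding of the circle |G| ≅ S¹ into M. -/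
variable {M : Type*} [MetricSpace M]

/-- The image of the edge `i (i+1)` under the min-geodesic map. -/
def edgeImage {n : ℕ} (x : ZMod n → M) (γ : ZMod n → ℝ → M) (i : ZMod n) : Set M :=
  γ i '' Set.Icc (0 : ℝ) (dist (x i) (x (i + 1)))

/-- The min-geodesic map of the cycle graph is a topological embedding: distinct edges
meet only in their common endpoints. -/
def EdgesEmbed {n : ℕ} (x : ZMod n → M) (γ : ZMod n → ℝ → M) : Prop :=
  ∀ i j : ZMod n, i ≠ j →
    edgeImage x γ i ∩ edgeImage x γ j ⊆
      ({x i, x (i + 1)} ∩ {x j, x (j + 1)} : Set M)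

lemma aux_natCast_zmod_ne_zero {n k : ℕ} [NeZero n] (hk : 0 < k) (h : k < n) :
    (k : ZMod n) ≠ 0 := by
  intro h0
  have hd := (ZMod.natCast_eq_zero_iff k n).mp h0
  exact absurd (Nat.le_of_dvd hk hd) (not_le.mpr h)

lemma aux_one_ne {n : ℕ} [NeZero n] (hn : 3 ≤ n) : (1 : ZMod n) ≠ 0 := by
  have : ((1:ℕ) : ZMod n) ≠ 0 := aux_natCast_zmod_ne_zero one_pos (by omega)
  simpa using this

lemma aux_two_ne {n : ℕ} [NeZero n] (hn : 3 ≤ n) : (2 : ZMod n) ≠ 0 := by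
  have : ((2:ℕ) : ZMod n) ≠ 0 := aux_natCast_zmod_ne_zero two_pos (by omega)
  simpa using this

lemma aux_geo_dist {γ : ℝ → M} {a b : M} (h : IsMinGeodesic γ a b) {s : ℝ}
    (hs : s ∈ Set.Icc (0:ℝ) (dist a b)) :
    dist a (γ s) = s ∧ dist (γ s) b = dist a b - s := by
  obtain ⟨h0, h1, hiso⟩ := h
  constructor
  · calc dist a (γ s) = dist (γ 0) (γ s) := by rw [h0]
    _ = |0 - s| := hiso 0 ⟨le_rfl, dist_nonneg⟩ s hs
    _ = s := by rw [zero_sub, abs_neg, abs_of_nonneg hs.1]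
  · calc dist (γ s) b = dist (γ s) (γ (dist a b)) := by rw [h1]
    _ = |s - dist a b| := hiso s hs (dist a b) ⟨dist_nonneg, le_rfl⟩
    _ = dist a b - s := by rw [abs_sub_comm, abs_of_nonneg (by linarith [hs.2])]

lemma aux_three_of_close {n : ℕ} [NeZero n] (hn : 3 ≤ n) (ε : ℝ)
    (x : ZMod n → M)
    (hminimal : ∀ i j : ZMod n, i ≠ j →
        (dist (x i) (x j) ≤ ε ↔ (j = i + 1 ∨ i = j + 1)))
    (i : ZMod n) (hd : dist (x i) (x (i + 2)) ≤ ε) : n = 3 := by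
  have h1 := aux_one_ne hn
  have h2 := aux_two_ne hn
  have hne : i ≠ i + 2 := by
    intro h
    exact h2 (left_eq_add.mp h)
  rcases (hminimal i (i + 2) hne).mp hd with h | h
  · exfalso
    have h21 : (2 : ZMod n) = 1 := add_left_cancel h
    exact h1 (by linear_combination h21)
  · have h3' : i = i + 3 := by rw [show i + (3:ZMod n) = i + 2 + 1 from by ring]; exact h
    have h3 : (3 : ZMod n) = 0 := left_eq_add.mp h3'
    have h3n : ((3:ℕ) : ZMod n) = 0 := by push_cast; exact h3
    have hdvd := (ZMod.natCast_eq_zero_iff 3 n).mp h3n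
    have := Nat.le_of_dvd (by norm_num) hdvd
    omega

lemma aux_nonadj {n : ℕ} [NeZero n] (hn : 3 ≤ n) (ε : ℝ)
    (x : ZMod n → M)
    (hminimal : ∀ i j : ZMod n, i ≠ j →
        (dist (x i) (x j) ≤ ε ↔ (j = i + 1 ∨ i = j + 1)))
    (γ : ZMod n → ℝ → M) (hγ : ∀ i, IsMinGeodesic (γ i) (x i) (x (i + 1)))
    (i j : ZMod n) (hij : i ≠ j) (h1 : j ≠ i + 1) (h2 : i ≠ j + 1)
    (p : M) (hpi : p ∈ edgeImage x γ i) (hpj : p ∈ edgeImage x γ j) : False := by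
  obtain ⟨s, hs, hps⟩ := hpi
  obtain ⟨t, ht, hpt⟩ := hpj
  have h1' : i ≠ i + 1 := fun h => aux_one_ne hn (left_eq_add.mp h)
  have hdi : dist (x i) (x (i + 1)) ≤ ε := (hminimal i (i + 1) h1').mpr (Or.inl rfl)
  have hdj : dist (x j) (x (j + 1)) ≤ ε :=
    (hminimal j (j + 1) (fun h => aux_one_ne hn (left_eq_add.mp h))).mpr (Or.inl rfl)
  obtain ⟨his, his'⟩ := aux_geo_dist (hγ i) hs
  obtain ⟨hjt, hjt'⟩ := aux_geo_dist (hγ j) ht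
  rw [hps] at his his'
  rw [hpt] at hjt hjt'
  have T1 : dist (x i) (x j) ≤ s + t := by
    calc dist (x i) (x j) ≤ dist (x i) p + dist p (x j) := dist_triangle _ _ _
    _ = s + t := by rw [his, dist_comm, hjt]
  have T2 : dist (x (i+1)) (x (j+1)) ≤
      (dist (x i) (x (i+1)) - s) + (dist (x j) (x (j+1)) - t) := by
    calc dist (x (i+1)) (x (j+1)) ≤ dist (x (i+1)) p + dist p (x (j+1)) :=
        dist_triangle _ _ _
    _ = _ := by rw [dist_comm (x (i+1)) p, his', hjt']
  rcases le_total (dist (x i) (x j)) ε with hle | hge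
  · rcases (hminimal i j hij).mp hle with h | h
    · exact h1 h
    · exact h2 h
  · have hle2 : dist (x (i+1)) (x (j+1)) ≤ ε := by linarith
    have hij1 : i + 1 ≠ j + 1 := fun h => hij (add_right_cancel h)
    rcases (hminimal (i+1) (j+1) hij1).mp hle2 with h | h
    · exact h1 (add_right_cancel h)
    · exact h2 (add_right_cancel h)

lemma aux_adj
    (h_rigid : ∀ (x y₁ y₂ : M) (γ₁ γ₂ : ℝ → M),
        IsMinGeodesic γ₁ x y₁ → IsMinGeodesic γ₂ x y₂ →
        (∃ a b : ℝ, 0 ≤ a ∧ a < b ∧ b ≤ min (dist x y₁) (dist x y₂) ∧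
            ∀ t ∈ Set.Icc a b, γ₁ t = γ₂ t) →
        ∀ t ∈ Set.Icc (0 : ℝ) (min (dist x y₁) (dist x y₂)), γ₁ t = γ₂ t)
    {n : ℕ} [NeZero n] (hn : 3 ≤ n) (ε : ℝ)
    (x : ZMod n → M) (hx : Function.Injective x)
    (hminimal : ∀ i j : ZMod n, i ≠ j →
        (dist (x i) (x j) ≤ ε ↔ (j = i + 1 ∨ i = j + 1)))
    (γ : ZMod n → ℝ → M) (hγ : ∀ i, IsMinGeodesic (γ i) (x i) (x (i + 1)))
    (i : ZMod n) (p : M)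
    (hpi : p ∈ edgeImage x γ i) (hpj : p ∈ edgeImage x γ (i + 1))
    (hne : p ≠ x (i + 1)) :
    n = 3 ∧ ∃ k : ZMod n, x (k + 2) ∈ edgeImage x γ k := by
  have e2 : i + 1 + 1 = i + 2 := by ring
  set d₁ := dist (x i) (x (i + 1)) with hd₁
  set d₂ := dist (x (i + 1)) (x (i + 2)) with hd₂
  have h1' : i ≠ i + 1 := fun h => aux_one_ne hn (left_eq_add.mp h)
  have hdi : d₁ ≤ ε := (hminimal i (i + 1) h1').mpr (Or.inl rfl)
  have hdj : d₂ ≤ ε := (hminimal (i+1) (i+2)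
      (fun h => aux_one_ne hn (left_eq_add.mp (by rw [← e2] at h; exact h)))).mpr
      (Or.inl e2.symm)
  have hγ2 : IsMinGeodesic (γ (i+1)) (x (i+1)) (x (i+2)) := by
    have := hγ (i+1); rwa [e2] at this
  obtain ⟨s, hs, hps⟩ := hpi
  obtain ⟨t, ht', hpt⟩ := hpj
  have ht : t ∈ Set.Icc (0:ℝ) d₂ := by rwa [e2] at ht'
  obtain ⟨his, his'⟩ := aux_geo_dist (hγ i) hs
  obtain ⟨hjt, hjt'⟩ := aux_geo_dist hγ2 ht
  rw [hps] at his his'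
  rw [hpt] at hjt hjt'
  -- t = d₁ - s
  have hts : t = d₁ - s := by
    have : dist (x (i+1)) p = d₁ - s := by rw [dist_comm]; exact his'
    rw [← hjt, this]
  have htpos : 0 < t := by
    rcases eq_or_lt_of_le ht.1 with h0 | h0
    · exfalso; apply hne; rw [← hpt, ← h0]; exact hγ2.1
    · exact h0
  have htd1 : t ≤ d₁ := by
    have := hs.1; linarith [hts]
  -- reversed geodesic from x(i+1) to x i
  set γ₁ : ℝ → M := fun v => γ i (d₁ - v) with hγ₁def
  have hdd : dist (x (i+1)) (x i) = d₁ := dist_comm _ _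
  have hγ1 : IsMinGeodesic γ₁ (x (i+1)) (x i) := by
    refine ⟨?_, ?_, ?_⟩
    · show γ i (d₁ - 0) = x (i+1)
      rw [sub_zero]; exact (hγ i).2.1
    · show γ i (d₁ - dist (x (i+1)) (x i)) = x i
      rw [hdd, sub_self]; exact (hγ i).1
    · intro a ha b hb
      rw [hdd] at ha hb
      have := (hγ i).2.2 (d₁ - a) ⟨by linarith [ha.2], by linarith [ha.1]⟩
        (d₁ - b) ⟨by linarith [hb.2], by linarith [hb.1]⟩
      show dist (γ i (d₁ - a)) (γ i (d₁ - b)) = |a - b|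
      rw [this, show d₁ - a - (d₁ - b) = b - a by ring, abs_sub_comm]
  have hp1 : γ₁ t = p := by
    show γ i (d₁ - t) = p
    rw [show d₁ - t = s by linarith [hts]]; exact hps
  rcases eq_or_lt_of_le ht.2 with heq | hlt
  · -- t = d₂ : p = x (i+2), and it lies on edge i
    have hpx : p = x (i+2) := by rw [← hpt, heq]; exact hγ2.2.1
    have hdist : dist (x i) (x (i+2)) ≤ ε := by
      rw [← hpx, his]; linarith [hs.2]
    refine ⟨aux_three_of_close hn ε x hminimal i hdist, i, ?_⟩
    exact ⟨s, hs, by rw [hps, hpx]⟩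
  · -- t < d₂ : concatenate and use rigidity
    set γ₃ : ℝ → M := fun v => if v ≤ t then γ₁ v else γ (i+1) v with hγ₃def
    have hγ3 : IsMinGeodesic γ₃ (x (i+1)) (x (i+2)) := by
      refine ⟨?_, ?_, ?_⟩
      · show (if (0:ℝ) ≤ t then γ₁ 0 else γ (i+1) 0) = x (i+1)
        rw [if_pos ht.1]; exact hγ1.1
      · show (if dist (x (i+1)) (x (i+2)) ≤ t then _ else _) = x (i+2)
        rw [if_neg (not_le.mpr hlt)]; exact hγ2.2.1
      · have key : ∀ a ∈ Set.Icc (0:ℝ) d₂, ∀ b ∈ Set.Icc (0:ℝ) d₂, a ≤ b →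
            dist (γ₃ a) (γ₃ b) = b - a := by
          intro a ha b hb hab
          by_cases hbt : b ≤ t
          · have hat : a ≤ t := le_trans hab hbt
            show dist (if a ≤ t then γ₁ a else _) (if b ≤ t then γ₁ b else _) = b - a
            rw [if_pos hat, if_pos hbt]
            rw [hγ1.2.2 a (by rw [hdd]; exact ⟨ha.1, le_trans hat htd1⟩)
              b (by rw [hdd]; exact ⟨hb.1, le_trans hbt htd1⟩)]
            rw [abs_sub_comm, abs_of_nonneg (by linarith)]
          · by_cases hat : a ≤ t
            · show dist (if a ≤ t then γ₁ a else _) (if b ≤ t then _ else γ (i+1) b)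
                  = b - a
              rw [if_pos hat, if_neg hbt]
              have hta : dist (γ₁ a) (γ₁ t) = t - a := by
                rw [hγ1.2.2 a (by rw [hdd]; exact ⟨ha.1, le_trans hat htd1⟩)
                  t (by rw [hdd]; exact ⟨ht.1, htd1⟩)]
                rw [abs_sub_comm, abs_of_nonneg (by linarith)]
              have htb : dist (γ (i+1) t) (γ (i+1) b) = b - t := by
                rw [hγ2.2.2 t ht b hb, abs_sub_comm, abs_of_nonneg (by linarith)]
              have hup : dist (γ₁ a) (γ (i+1) b) ≤ b - a := by
                calc dist (γ₁ a) (γ (i+1) b)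
                    ≤ dist (γ₁ a) (γ₁ t) + dist (γ₁ t) (γ (i+1) b) :=
                      dist_triangle _ _ _
                  _ = (t - a) + (b - t) := by rw [hta, hp1, ← hpt, htb]
                  _ = b - a := by ring
              have h1a : dist (x (i+1)) (γ₁ a) = a :=
                (aux_geo_dist hγ1 (by rw [hdd]; exact ⟨ha.1, le_trans hat htd1⟩)).1
              have h2b : dist (x (i+1)) (γ (i+1) b) = b := (aux_geo_dist hγ2 hb).1
              have hlow : b ≤ a + dist (γ₁ a) (γ (i+1) b) := by
                calc b = dist (x (i+1)) (γ (i+1) b) := h2b.symm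
                  _ ≤ dist (x (i+1)) (γ₁ a) + dist (γ₁ a) (γ (i+1) b) :=
                      dist_triangle _ _ _
                  _ = a + dist (γ₁ a) (γ (i+1) b) := by rw [h1a]
              linarith
            · show dist (if a ≤ t then _ else γ (i+1) a) (if b ≤ t then _ else γ (i+1) b)
                  = b - a
              rw [if_neg hat, if_neg hbt]
              rw [hγ2.2.2 a ha b hb, abs_sub_comm, abs_of_nonneg (by linarith)]
        intro a ha b hb
        rw [← hd₂] at ha hb
        rcases le_total a b with h | h
        · rw [key a ha b hb h, abs_sub_comm, abs_of_nonneg (by linarith)]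
        · rw [dist_comm, key b hb a ha h, abs_of_nonneg (by linarith)]
    -- rigidity: γ (i+1) and γ₃ agree on [0, d₂]
    have agree2 : ∀ v ∈ Set.Icc (0:ℝ) d₂, γ (i+1) v = γ₃ v := by
      have := h_rigid (x (i+1)) (x (i+2)) (x (i+2)) (γ (i+1)) γ₃ hγ2 hγ3
        ⟨t, d₂, ht.1, hlt, by rw [min_self, ← hd₂], ?_⟩
      · intro v hv
        have h := this v (by rw [min_self, ← hd₂]; exact hv)
        exact h
      · intro v hv
        show γ (i+1) v = if v ≤ t then γ₁ v else γ (i+1) v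
        rcases eq_or_lt_of_le hv.1 with hvt | hvt
        · rw [if_pos (le_of_eq hvt.symm), ← hvt, hp1, ← hpt]
        · rw [if_neg (not_le.mpr hvt)]
    -- rigidity: γ₁ and γ₃ agree on [0, min d₁ d₂]
    have agree1 : ∀ v ∈ Set.Icc (0:ℝ) (min d₁ d₂), γ₁ v = γ₃ v := by
      have := h_rigid (x (i+1)) (x i) (x (i+2)) γ₁ γ₃ hγ1 hγ3
        ⟨0, t, le_rfl, htpos, by rw [hdd, ← hd₂]; exact le_min htd1 (le_of_lt hlt), ?_⟩
      · intro v hv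
        exact this v (by rw [hdd, ← hd₂]; exact hv)
      · intro v hv
        show γ₁ v = if v ≤ t then γ₁ v else γ (i+1) v
        rw [if_pos hv.2]
    set m := min d₁ d₂ with hm
    have hm0 : 0 ≤ m := le_min dist_nonneg dist_nonneg
    have hmd2 : m ≤ d₂ := min_le_right _ _
    have hmeq : γ₁ m = γ (i+1) m := by
      rw [agree1 m ⟨hm0, le_rfl⟩, ← agree2 m ⟨hm0, hmd2⟩]
    rcases le_total d₁ d₂ with hc | hc
    · -- m = d₁ : x i lies on edge (i+1)
      have hmd : m = d₁ := min_eq_left hc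
      have hxi : x i = γ (i+1) d₁ := by
        have hg1 : γ₁ d₁ = x i := by
          show γ i (d₁ - d₁) = x i
          rw [sub_self]; exact (hγ i).1
        rw [← hg1, ← hmd]; exact hmeq
      have hdist : dist (x i) (x (i+2)) ≤ ε := by
        have := hγ2.2.2 d₁ ⟨dist_nonneg, hc⟩ d₂ ⟨dist_nonneg, le_rfl⟩
        rw [← hxi, hγ2.2.1] at this
        rw [this, abs_sub_comm, abs_of_nonneg (by linarith)]
        linarith [dist_nonneg (x := x i) (y := x (i+1))]
      have hn3 : n = 3 := aux_three_of_close hn ε x hminimal i hdist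
      refine ⟨hn3, i + 1, ?_⟩
      have hidx : i + 1 + 2 = i := by
        have h30 : (3 : ZMod n) = 0 := by
          have : ((3:ℕ) : ZMod n) = 0 := by
            rw [hn3]; exact ZMod.natCast_self 3
          push_cast at this; exact this
        linear_combination h30
      rw [hidx]
      exact ⟨d₁, by rw [e2]; exact ⟨dist_nonneg, hc⟩, hxi.symm⟩
    · -- m = d₂ : x (i+2) lies on edge i
      have hmd : m = d₂ := min_eq_right hc
      have hxi2 : x (i+2) = γ i (d₁ - d₂) := by
        have : γ₁ d₂ = γ (i+1) d₂ := by rw [← hmd]; exact hmeq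
        rw [← hγ2.2.1]
        exact this.symm
      have hdist : dist (x i) (x (i+2)) ≤ ε := by
        have := (hγ i).2.2 0 ⟨le_rfl, dist_nonneg⟩ (d₁ - d₂)
          ⟨by linarith, by linarith [dist_nonneg (x := x (i+1)) (y := x (i+2))]⟩
        rw [(hγ i).1, ← hxi2] at this
        rw [this, zero_sub, abs_neg, abs_of_nonneg (by linarith)]
        linarith [dist_nonneg (x := x (i+1)) (y := x (i+2))]
      refine ⟨aux_three_of_close hn ε x hminimal i hdist, i, ?_⟩
      exact ⟨d₁ - d₂, ⟨by linarith, by linarith [dist_nonneg (x := x (i+1)) (y := x (i+2))]⟩,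
        hxi2.symm⟩

/-- Let `x : ZMod n → M` (`3 ≤ n`) be injective with minimal `ε`-cycle
neighbourhood graph, and let `γ i` be a minimising geodesic from `x i` to `x (i+1)`
realising a min-geodesic map `f` of the cycle graph.  Then `f` fails to be an embedding
iff `n = 3` and one of the three vertices lies on the minimising geodesic between the
other two; in particular, if `4 ≤ n` then `f` is an embedding. -/
theorem min_geodesic_cycle_embedding
    (h_rigid : ∀ (x y₁ y₂ : M) (γ₁ γ₂ : ℝ → M),
        IsMinGeodesic γ₁ x y₁ → IsMinGeodesic γ₂ x y₂ →
        (∃ a b : ℝ, 0 ≤ a ∧ a < b ∧ b ≤ min (dist x y₁) (dist x y₂) ∧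
            ∀ t ∈ Set.Icc a b, γ₁ t = γ₂ t) →
        ∀ t ∈ Set.Icc (0 : ℝ) (min (dist x y₁) (dist x y₂)), γ₁ t = γ₂ t)
    {n : ℕ} [NeZero n] (hn : 3 ≤ n) (ε : ℝ)
    (x : ZMod n → M) (hx : Function.Injective x)
    (hminimal : ∀ i j : ZMod n, i ≠ j →
        (dist (x i) (x j) ≤ ε ↔ (j = i + 1 ∨ i = j + 1)))
    (γ : ZMod n → ℝ → M) (hγ : ∀ i, IsMinGeodesic (γ i) (x i) (x (i + 1))) :
    (¬ EdgesEmbed x γ ↔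
        n = 3 ∧ ∃ i : ZMod n, x (i + 2) ∈ edgeImage x γ i) ∧
    (4 ≤ n → EdgesEmbed x γ) := by
  have main : ¬ EdgesEmbed x γ ↔
      n = 3 ∧ ∃ i : ZMod n, x (i + 2) ∈ edgeImage x γ i := by
    constructor
    · intro hE
      rw [EdgesEmbed] at hE
      push_neg at hE
      obtain ⟨i, j, hij, hsub⟩ := hE
      obtain ⟨p, ⟨hpi, hpj⟩, hpout⟩ := Set.not_subset.mp hsub
      by_cases hji1 : j = i + 1
      · subst hji1
        apply aux_adj h_rigid hn ε x hx hminimal γ hγ i p hpi hpj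
        intro hp
        exact hpout ⟨by simp [hp], by simp [hp]⟩
      · by_cases hij1 : i = j + 1
        · apply aux_adj h_rigid hn ε x hx hminimal γ hγ j p hpj
            (by rw [← hij1]; exact hpi)
          intro hp
          exact hpout ⟨by simp [hp, hij1], by simp [hp]⟩
        · exact (aux_nonadj hn ε x hminimal γ hγ i j hij hji1 hij1 p hpi hpj).elim
    · rintro ⟨hn3, i, hmem⟩
      intro hE
      have h1 := aux_one_ne hn
      have h2 := aux_two_ne hn
      have hne1 : i ≠ i + 1 := fun h => h1 (left_eq_add.mp h)
      have hp2 : x (i + 2) ∈ edgeImage x γ (i + 1) := by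
        refine ⟨dist (x (i+1)) (x (i+1+1)), ⟨dist_nonneg, le_rfl⟩, ?_⟩
        rw [(hγ (i+1)).2.1, show i+1+1 = i+2 from by ring]
      have hmemint := hE i (i + 1) hne1 ⟨hmem, hp2⟩
      have hfirst := hmemint.1
      simp only [Set.mem_insert_iff, Set.mem_singleton_iff] at hfirst
      rcases hfirst with h | h
      · exact h2 (add_eq_left.mp (hx h))
      · have h21 : (2 : ZMod n) = 1 := add_left_cancel (hx h)
        exact h1 (by linear_combination h21)
  refine ⟨main, fun h4 => ?_⟩
  by_contra hE
  obtain ⟨hn3, -⟩ := main.mp hE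
  omega
end
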